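/- arXiv:1809.06110 — 6 statements merged into one kernel-verified Lean document; each statement's English description precedes it below -/
import Mathlib

section
/- Let 𝓔 : SO(3)×SO(3) → ℝ be a continuous function. If (U,V) ∈ SO(3)×SO(3) is not a local pseudo-minimum of 𝓔, then there exists a continuous path τ : [0,1] → SO(3)×SO(3) with τ(0) = (U,V), such that τ(1) is a local pseudo-minimum of 𝓔 and 𝓔(τ(t)) ≤ 𝓔(U,V) for every t ∈ [0,1] (so that the maximum value of 𝓔 along the path equals 𝓔(U,V)). -/
noncomputable section
open Matrix

abbrev M3 := Matrix (Fin 3) (Fin 3) ℝ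

/-- The group `SO(3)` of real 3×3 orthogonal matrices with determinant 1. -/
def SO3 : Set M3 := {U | Uᵀ * U = 1 ∧ U.det = 1}

/-- `(U, V)` is a local pseudo-minimum of the continuous function `E` on `SO(3) × SO(3)`:
there is `ε > 0` such that for every direction `(A, B)` of antisymmetric matrices with
`‖A‖² + ‖B‖² = 1` (Frobenius norm), there is a sequence `tₙ ∈ (0, ε]` tending to `0` along
which the energy on the geodesic `t ↦ (U·exp(tA), V·exp(tB))` is `≥ E (U, V)`. -/
def IsLocalPseudoMin (E : M3 × M3 → ℝ) (U V : M3) : Prop :=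
  ∃ ε > (0 : ℝ), ∀ A B : M3, Aᵀ = -A → Bᵀ = -B →
    ((∑ i, ∑ j, (A i j) ^ 2) + (∑ i, ∑ j, (B i j) ^ 2) = 1) →
    ∃ t : ℕ → ℝ, (∀ n, t n ∈ Set.Ioc (0 : ℝ) ε) ∧
      Filter.Tendsto t Filter.atTop (nhds 0) ∧
      ∀ n, E (U, V) ≤ E (U * NormedSpace.exp (t n • A), V * NormedSpace.exp (t n • B))

namespace SO3Proof

open NormedSpace

lemma so3_transpose {U : M3} (hU : U ∈ SO3) : Uᵀ ∈ SO3 := by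
  obtain ⟨h1, h2⟩ := hU
  refine ⟨?_, by rwa [Matrix.det_transpose]⟩
  rw [Matrix.transpose_transpose]
  exact mul_eq_one_comm.mp h1

lemma so3_mul {U W : M3} (hU : U ∈ SO3) (hW : W ∈ SO3) : U * W ∈ SO3 := by
  obtain ⟨h1, h2⟩ := hU; obtain ⟨h3, h4⟩ := hW
  constructor
  · rw [Matrix.transpose_mul]
    have : Wᵀ * Uᵀ * (U * W) = Wᵀ * ((Uᵀ * U) * W) := by
      rw [Matrix.mul_assoc, Matrix.mul_assoc]
    rw [this, h1, Matrix.one_mul, h3]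
  · rw [Matrix.det_mul, h2, h4, mul_one]

lemma so3_one : (1 : M3) ∈ SO3 := ⟨by simp, by simp⟩

lemma so3_mul_transpose {U : M3} (hU : U ∈ SO3) : U * Uᵀ = 1 :=
  mul_eq_one_comm.mp hU.1

lemma so3_closed : IsClosed SO3 := by
  have h1 : IsClosed {U : M3 | Uᵀ * U = 1} :=
    isClosed_eq ((continuous_id.matrix_transpose).matrix_mul continuous_id) continuous_const
  have h2 : IsClosed {U : M3 | U.det = 1} :=
    isClosed_eq (continuous_id.matrix_det) continuous_const
  exact h1.inter h2

lemma so3_compact : IsCompact SO3 := by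
  letI : NormedAddCommGroup M3 := Matrix.normedAddCommGroup
  letI : NormedSpace ℝ M3 := Matrix.normedSpace
  letI : ProperSpace M3 := FiniteDimensional.proper ℝ M3
  refine Metric.isCompact_of_isClosed_isBounded so3_closed ?_
  refine Metric.isBounded_closedBall (x := (0:M3)) (r := 1) |>.subset ?_
  intro U hU
  rw [Metric.mem_closedBall, dist_zero_right]
  refine pi_norm_le_iff_of_nonneg zero_le_one |>.mpr fun i => ?_
  refine pi_norm_le_iff_of_nonneg zero_le_one |>.mpr fun j => ?_
  have hd := congrFun (congrFun hU.1 j) j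
  rw [Matrix.mul_apply, Matrix.one_apply_eq] at hd
  simp only [Matrix.transpose_apply] at hd
  have hle : U i j * U i j ≤ ∑ k, U k j * U k j :=
    Finset.single_le_sum (fun k _ => mul_self_nonneg (U k j)) (Finset.mem_univ i)
  rw [hd] at hle
  simpa [Real.norm_eq_abs] using abs_le_one_iff_mul_self_le_one.mpr hle

lemma K2_compact : IsCompact (SO3 ×ˢ SO3) := so3_compact.prod so3_compact
lemma K2_closed : IsClosed (SO3 ×ˢ SO3) := so3_closed.prod so3_closed

lemma exp_cont : Continuous (fun A : M3 => exp A) := by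
  letI : SeminormedRing M3 := Matrix.linftyOpSemiNormedRing
  letI : NormedRing M3 := Matrix.linftyOpNormedRing
  letI : NormedAlgebra ℝ M3 := Matrix.linftyOpNormedAlgebra
  exact continuous_iff_continuousAt.mpr fun x => (exp_analytic (𝕂 := ℝ) x).continuousAt

lemma exp_mem {A : M3} (hA : Aᵀ = -A) : exp A ∈ SO3 := by
  have h1 : (exp A)ᵀ * exp A = 1 := by
    rw [← Matrix.exp_transpose, hA,
      ← Matrix.exp_add_of_commute (-A) A (Commute.refl A).neg_left, neg_add_cancel, exp_zero]
  have hdet2 : (exp A).det * (exp A).det = 1 := by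
    have := congrArg Matrix.det h1
    rwa [Matrix.det_mul, Matrix.det_transpose, Matrix.det_one] at this
  have hpos : 0 ≤ (exp A).det := by
    have h2 : exp A = exp ((2⁻¹ : ℝ) • A) * exp ((2⁻¹ : ℝ) • A) := by
      rw [← Matrix.exp_add_of_commute _ _ (Commute.refl _), ← add_smul]
      norm_num
    rw [h2, Matrix.det_mul]
    exact mul_self_nonneg _
  exact ⟨h1, by nlinarith⟩

lemma aux_det_ne {A : M3} (hA : Aᵀ = -A) : (1 + A).det ≠ 0 := by
  intro h
  obtain ⟨v, hv0, hv⟩ := Matrix.exists_mulVec_eq_zero_iff.mpr h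
  have hskew : v ⬝ᵥ (A *ᵥ v) = 0 := by
    have h1 : v ⬝ᵥ (A *ᵥ v) = (Aᵀ *ᵥ v) ⬝ᵥ v := by
      rw [Matrix.dotProduct_mulVec, Matrix.mulVec_transpose]
    rw [hA, Matrix.neg_mulVec, neg_dotProduct, dotProduct_comm (A *ᵥ v) v] at h1
    linarith
  have hexp : (1 + A) *ᵥ v = v + A *ᵥ v := by rw [Matrix.add_mulVec, Matrix.one_mulVec]
  have : v ⬝ᵥ v = 0 := by
    have h2 := congrArg (fun w => v ⬝ᵥ w) (hexp ▸ hv)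
    simp only [dotProduct_add, dotProduct_zero] at h2
    linarith [hskew]
  exact hv0 (dotProduct_self_eq_zero.mp this)

lemma smul_antisym {A : M3} (hA : Aᵀ = -A) (t : ℝ) : (t • A)ᵀ = -(t • A) := by
  rw [Matrix.transpose_smul, hA, smul_neg]

lemma commute_inv_left {M N : M3} (h : M * N = N * M) (hM : IsUnit M.det) :
    M⁻¹ * N = N * M⁻¹ := by
  calc M⁻¹ * N = M⁻¹ * N * (M * M⁻¹) := by rw [Matrix.mul_nonsing_inv _ hM, Matrix.mul_one]
    _ = M⁻¹ * (N * M) * M⁻¹ := by simp only [Matrix.mul_assoc]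
    _ = M⁻¹ * (M * N) * M⁻¹ := by rw [h]
    _ = M⁻¹ * M * N * M⁻¹ := by simp only [Matrix.mul_assoc]
    _ = N * M⁻¹ := by rw [Matrix.nonsing_inv_mul _ hM, Matrix.one_mul]

lemma cayley_mem {A : M3} (hA : Aᵀ = -A) : (1 - A) * (1 + A)⁻¹ ∈ SO3 := by
  have hp : IsUnit (1 + A).det := isUnit_iff_ne_zero.mpr (aux_det_ne hA)
  have hTr : (1 - A)ᵀ = 1 + A := by
    rw [Matrix.transpose_sub, Matrix.transpose_one, hA, sub_neg_eq_add]
  have hTr2 : (1 + A)ᵀ = 1 - A := by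
    rw [Matrix.transpose_add, Matrix.transpose_one, hA, ← sub_eq_add_neg]
  have hdm : (1 - A).det = (1 + A).det := by rw [← Matrix.det_transpose (1 - A), hTr]
  have hm : IsUnit (1 - A).det := hdm ▸ hp
  have hcomm : (1 + A) * (1 - A) = (1 - A) * (1 + A) := by noncomm_ring
  constructor
  · rw [Matrix.transpose_mul, Matrix.transpose_nonsing_inv, hTr2, hTr]
    calc (1 - A)⁻¹ * (1 + A) * ((1 - A) * (1 + A)⁻¹)
        = (1 - A)⁻¹ * ((1 + A) * (1 - A)) * (1 + A)⁻¹ := by simp only [Matrix.mul_assoc]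
      _ = (1 - A)⁻¹ * ((1 - A) * (1 + A)) * (1 + A)⁻¹ := by rw [hcomm]
      _ = (1 - A)⁻¹ * (1 - A) * ((1 + A) * (1 + A)⁻¹) := by simp only [Matrix.mul_assoc]
      _ = 1 := by rw [Matrix.nonsing_inv_mul _ hm, Matrix.mul_nonsing_inv _ hp, Matrix.one_mul]
  · rw [Matrix.det_mul, Matrix.det_nonsing_inv, Ring.inverse_eq_inv, hdm]
    exact mul_inv_cancel₀ (aux_det_ne hA)

lemma cayleyA_antisym {W : M3} (hW : W ∈ SO3) (h : (1 + W).det ≠ 0) :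
    ((1 - W) * (1 + W)⁻¹)ᵀ = -((1 - W) * (1 + W)⁻¹) := by
  have hu : IsUnit (1 + W).det := isUnit_iff_ne_zero.mpr h
  have hWdet : IsUnit (Wᵀ).det := by
    rw [Matrix.det_transpose, hW.2]; exact isUnit_one
  have e1 : (1 + W)ᵀ = Wᵀ * (1 + W) := by
    rw [Matrix.transpose_add, Matrix.transpose_one, Matrix.mul_add, Matrix.mul_one, hW.1]
    abel
  have e2 : (1 - W)ᵀ = Wᵀ * (W - 1) := by
    rw [Matrix.transpose_sub, Matrix.transpose_one, Matrix.mul_sub, Matrix.mul_one, hW.1]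
  have lhs : ((1 - W) * (1 + W)⁻¹)ᵀ = (1 + W)⁻¹ * (W - 1) := by
    rw [Matrix.transpose_mul, Matrix.transpose_nonsing_inv, e1, e2, Matrix.mul_inv_rev]
    calc (1 + W)⁻¹ * (Wᵀ)⁻¹ * (Wᵀ * (W - 1))
        = (1 + W)⁻¹ * ((Wᵀ)⁻¹ * Wᵀ) * (W - 1) := by simp only [Matrix.mul_assoc]
      _ = (1 + W)⁻¹ * (W - 1) := by
          rw [Matrix.nonsing_inv_mul _ hWdet, Matrix.mul_one]
  have hcomm : (1 + W) * (W - 1) = (W - 1) * (1 + W) := by noncomm_ring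
  rw [lhs, commute_inv_left hcomm hu]
  rw [← Matrix.neg_mul, neg_sub]

lemma cayley_endpoint {W : M3} (hW : W ∈ SO3) (h : (1 + W).det ≠ 0) :
    (1 - (1 - W) * (1 + W)⁻¹) * (1 + (1 - W) * (1 + W)⁻¹)⁻¹ = W := by
  set A := (1 - W) * (1 + W)⁻¹ with hAdef
  have hA : Aᵀ = -A := cayleyA_antisym hW h
  have hu : IsUnit (1 + W).det := isUnit_iff_ne_zero.mpr h
  have h1 : A * (1 + W) = 1 - W := by
    rw [hAdef, Matrix.mul_assoc, Matrix.nonsing_inv_mul _ hu, Matrix.mul_one]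
  have h4 : W * ((1 + A) * (1 + W)) = (1 - A) * (1 + W) := by
    rw [Matrix.add_mul, Matrix.sub_mul, Matrix.one_mul, h1]
    noncomm_ring
  have h5 : 1 - A = W * (1 + A) := by
    calc 1 - A = (1 - A) * (1 + W) * (1 + W)⁻¹ := by
          rw [Matrix.mul_assoc, Matrix.mul_nonsing_inv _ hu, Matrix.mul_one]
      _ = W * ((1 + A) * (1 + W)) * (1 + W)⁻¹ := by rw [h4]
      _ = W * (1 + A) * ((1 + W) * (1 + W)⁻¹) := by simp only [Matrix.mul_assoc]
      _ = W * (1 + A) := by rw [Matrix.mul_nonsing_inv _ hu, Matrix.mul_one]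
  have hu2 : IsUnit (1 + A).det := isUnit_iff_ne_zero.mpr (aux_det_ne hA)
  rw [h5, Matrix.mul_assoc, Matrix.mul_nonsing_inv _ hu2, Matrix.mul_one]



def inv' (M : M3) : M3 := (M.det)⁻¹ • M.adjugate

lemma inv'_eq {M : M3} (h : M.det ≠ 0) : inv' M = M⁻¹ := by
  rw [Matrix.inv_def, Ring.inverse_eq_inv]; rfl

lemma inv'_one : inv' (1 : M3) = 1 := by
  simp [inv']

/-- The Cayley path from `1` towards `W`. -/
def cay (W : M3) (t : ℝ) : M3 :=
  (1 - t • ((1 - W) * inv' (1 + W))) * inv' (1 + t • ((1 - W) * inv' (1 + W)))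

lemma cay_eq {W : M3} (hW : W ∈ SO3) (h : (1 + W).det ≠ 0) (t : ℝ) :
    cay W t = (1 - t • ((1 - W) * (1 + W)⁻¹)) * (1 + t • ((1 - W) * (1 + W)⁻¹))⁻¹ := by
  have hA : ((1 - W) * (1 + W)⁻¹)ᵀ = -((1 - W) * (1 + W)⁻¹) := cayleyA_antisym hW h
  have h2 : (1 + t • ((1 - W) * (1 + W)⁻¹)).det ≠ 0 := aux_det_ne (smul_antisym hA t)
  rw [cay, inv'_eq h, inv'_eq h2]

lemma cay_mem {W : M3} (hW : W ∈ SO3) (h : (1 + W).det ≠ 0) (t : ℝ) :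
    cay W t ∈ SO3 := by
  rw [cay_eq hW h]
  exact cayley_mem (smul_antisym (cayleyA_antisym hW h) t)

lemma cay_zero (W : M3) : cay W 0 = 1 := by
  simp [cay, inv'_one]

lemma cay_one {W : M3} (hW : W ∈ SO3) (h : (1 + W).det ≠ 0) : cay W 1 = W := by
  rw [cay_eq hW h, one_smul]
  exact cayley_endpoint hW h

lemma cay_of_one (t : ℝ) : cay 1 t = 1 := by
  simp [cay, inv'_one]

lemma cay_continuousOn :
    ContinuousOn (fun p : M3 × ℝ => cay p.1 p.2)
      {p : M3 × ℝ | p.1 ∈ SO3 ∧ (1 + p.1).det ≠ 0} := by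
  set s : Set (M3 × ℝ) := {p : M3 × ℝ | p.1 ∈ SO3 ∧ (1 + p.1).det ≠ 0} with hs
  have c1 : ContinuousOn (fun p : M3 × ℝ => (1 + p.1 : M3)) s :=
    continuousOn_const.add continuousOn_fst
  have cdet1 : ContinuousOn (fun p : M3 × ℝ => (1 + p.1).det) s :=
    (continuous_id.matrix_det).comp_continuousOn c1
  have cinv1 : ContinuousOn (fun p : M3 × ℝ => inv' (1 + p.1)) s := by
    exact (cdet1.inv₀ fun p hp => hp.2).smul
      ((continuous_id.matrix_adjugate).comp_continuousOn c1)
  have cAof : ContinuousOn (fun p : M3 × ℝ => (1 - p.1) * inv' (1 + p.1)) s :=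
    (continuousOn_const.sub continuousOn_fst).mul cinv1
  have ctA : ContinuousOn (fun p : M3 × ℝ => p.2 • ((1 - p.1) * inv' (1 + p.1))) s :=
    continuousOn_snd.smul cAof
  have cg : ContinuousOn (fun p : M3 × ℝ => (1 + p.2 • ((1 - p.1) * inv' (1 + p.1)) : M3)) s :=
    continuousOn_const.add ctA
  have hdetg : ∀ p ∈ s, (1 + p.2 • ((1 - p.1) * inv' (1 + p.1)) : M3).det ≠ 0 := by
    intro p hp
    rw [inv'_eq hp.2]
    exact aux_det_ne (smul_antisym (cayleyA_antisym hp.1 hp.2) p.2)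
  have cdetg : ContinuousOn (fun p : M3 × ℝ =>
      (1 + p.2 • ((1 - p.1) * inv' (1 + p.1)) : M3).det) s :=
    (continuous_id.matrix_det).comp_continuousOn cg
  have cinv2 : ContinuousOn (fun p : M3 × ℝ =>
      inv' (1 + p.2 • ((1 - p.1) * inv' (1 + p.1)))) s :=
    (cdetg.inv₀ hdetg).smul ((continuous_id.matrix_adjugate).comp_continuousOn cg)
  exact (continuousOn_const.sub ctA).mul cinv2



lemma cay_continuous_of {W : M3} (hW : W ∈ SO3) (h : (1 + W).det ≠ 0) :
    Continuous fun t : ℝ => cay W t := by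
  have hA : ((1 - W) * (1 + W)⁻¹)ᵀ = -((1 - W) * (1 + W)⁻¹) := cayleyA_antisym hW h
  have hAin : (1 - W) * inv' (1 + W) = (1 - W) * (1 + W)⁻¹ := by rw [inv'_eq h]
  have hdet : ∀ t : ℝ, (1 + t • ((1 - W) * inv' (1 + W)) : M3).det ≠ 0 := by
    intro t; rw [hAin]; exact aux_det_ne (smul_antisym hA t)
  have cg : Continuous fun t : ℝ => (1 + t • ((1 - W) * inv' (1 + W)) : M3) :=
    continuous_const.add (continuous_id.smul continuous_const)
  have cinv : Continuous fun t : ℝ => inv' (1 + t • ((1 - W) * inv' (1 + W))) :=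
    ((cg.matrix_det).inv₀ hdet).smul cg.matrix_adjugate
  exact (continuous_const.sub (continuous_id.smul continuous_const)).mul cinv

/-- The two-sided Cayley path from `x` to `y` in `SO3 × SO3`. -/
def cpath (x y : M3 × M3) (t : ℝ) : M3 × M3 :=
  (x.1 * cay (x.1ᵀ * y.1) t, x.2 * cay (x.2ᵀ * y.2) t)

set_option maxHeartbeats 1000000 in
lemma connect (x : M3 × M3) (hx : x ∈ SO3 ×ˢ SO3) (O : Set (M3 × M3))
    (hO : IsOpen O) (hxO : x ∈ O) :
    ∃ N : Set (M3 × M3), IsOpen N ∧ x ∈ N ∧ ∀ y ∈ SO3 ×ˢ SO3, y ∈ N →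
      ∃ γ : Path x y, ∀ s, γ s ∈ SO3 ×ˢ SO3 ∧ γ s ∈ O := by
  obtain ⟨hx1, hx2⟩ := hx
  set D : Set (M3 × M3) :=
    {y | (4:ℝ) ≤ (1 + x.1ᵀ * y.1).det ∧ (4:ℝ) ≤ (1 + x.2ᵀ * y.2).det} with hD
  have c1 : Continuous fun y : M3 × M3 => (1 + x.1ᵀ * y.1).det :=
    Continuous.matrix_det (continuous_const.add (continuous_const.matrix_mul continuous_fst))
  have c2 : Continuous fun y : M3 × M3 => (1 + x.2ᵀ * y.2).det :=
    Continuous.matrix_det (continuous_const.add (continuous_const.matrix_mul continuous_snd))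
  have hDclosed : IsClosed D :=
    (isClosed_le continuous_const c1).inter (isClosed_le continuous_const c2)
  set S : Set ((M3 × M3) × ℝ) := ((SO3 ×ˢ SO3) ∩ D) ×ˢ Set.Icc (0:ℝ) 1 with hS
  have hScompact : IsCompact S := (K2_compact.inter_right hDclosed).prod isCompact_Icc
  have hSclosed : IsClosed S := (K2_closed.inter hDclosed).prod isClosed_Icc
  have hyW : ∀ y ∈ (SO3 ×ˢ SO3) ∩ D,
      (x.1ᵀ * y.1 ∈ SO3 ∧ (1 + x.1ᵀ * y.1).det ≠ 0) ∧
      (x.2ᵀ * y.2 ∈ SO3 ∧ (1 + x.2ᵀ * y.2).det ≠ 0) := by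
    intro y hy
    have h41 := hy.2.1
    have h42 := hy.2.2
    exact ⟨⟨so3_mul (so3_transpose hx1) hy.1.1, by intro h0; rw [h0] at h41; linarith⟩,
      ⟨so3_mul (so3_transpose hx2) hy.1.2, by intro h0; rw [h0] at h42; linarith⟩⟩
  have hFcont : ContinuousOn (fun p : (M3 × M3) × ℝ => cpath x p.1 p.2) S := by
    refine ContinuousOn.prodMk ?_ ?_
    · refine continuousOn_const.mul ?_
      exact cay_continuousOn.comp (s := S)
        (f := fun p : (M3 × M3) × ℝ => ((x.1ᵀ * p.1.1 : M3), p.2))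
        (Continuous.continuousOn
          ((continuous_const.matrix_mul (continuous_fst.comp continuous_fst)).prodMk
            continuous_snd))
        (fun p hp => (hyW p.1 hp.1).1)
    · refine continuousOn_const.mul ?_
      exact cay_continuousOn.comp (s := S)
        (f := fun p : (M3 × M3) × ℝ => ((x.2ᵀ * p.1.2 : M3), p.2))
        (Continuous.continuousOn
          ((continuous_const.matrix_mul ((continuous_snd.comp continuous_fst))).prodMk
            continuous_snd))
        (fun p hp => (hyW p.1 hp.1).2)
  have hFx : ∀ t : ℝ, cpath x x t = x := by
    intro t
    have e1 : x.1ᵀ * x.1 = 1 := hx1.1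
    have e2 : x.2ᵀ * x.2 = 1 := hx2.1
    simp [cpath, e1, e2, cay_of_one]
  set Bad : Set ((M3 × M3) × ℝ) :=
    S ∩ (fun p : (M3 × M3) × ℝ => cpath x p.1 p.2) ⁻¹' Oᶜ with hBad
  have hBadclosed : IsClosed Bad :=
    hFcont.preimage_isClosed_of_isClosed hSclosed hO.isClosed_compl
  have hBadcompact : IsCompact Bad :=
    hScompact.of_isClosed_subset hBadclosed Set.inter_subset_left
  have hPclosed : IsClosed (Prod.fst '' Bad) := (hBadcompact.image continuous_fst).isClosed
  have hxP : x ∉ Prod.fst '' Bad := by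
    rintro ⟨p, hp, hpx⟩
    have hpO : cpath x p.1 p.2 ∈ Oᶜ := hp.2
    rw [hpx, hFx] at hpO
    exact hpO hxO
  have h8 : ∀ u : M3, u ∈ SO3 → (4:ℝ) < (1 + uᵀ * u).det := by
    intro u hu
    rw [hu.1, show (1:M3) + 1 = (2:ℝ) • (1:M3) from (two_smul ℝ (1:M3)).symm,
      Matrix.det_smul, Matrix.det_one]
    norm_num
  set D0 : Set (M3 × M3) :=
    {y | (4:ℝ) < (1 + x.1ᵀ * y.1).det ∧ (4:ℝ) < (1 + x.2ᵀ * y.2).det} with hD0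
  have hD0open : IsOpen D0 :=
    (isOpen_lt continuous_const c1).inter (isOpen_lt continuous_const c2)
  have hxD0 : x ∈ D0 := ⟨h8 x.1 hx1, h8 x.2 hx2⟩
  refine ⟨(Prod.fst '' Bad)ᶜ ∩ D0, hPclosed.isOpen_compl.inter hD0open, ⟨hxP, hxD0⟩, ?_⟩
  intro y hyK2 hyN
  have hyD : y ∈ D := ⟨le_of_lt hyN.2.1, le_of_lt hyN.2.2⟩
  have hymem : y ∈ (SO3 ×ˢ SO3) ∩ D := ⟨hyK2, hyD⟩
  have hW1 := (hyW y hymem).1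
  have hW2 := (hyW y hymem).2
  have hmemS : ∀ t : ℝ, t ∈ Set.Icc (0:ℝ) 1 → ((y, t) : (M3 × M3) × ℝ) ∈ S :=
    fun t ht => ⟨hymem, ht⟩
  have hγcont : Continuous (fun t : ℝ => cpath x y t) := by
    simp only [cpath]
    exact (continuous_const.mul (cay_continuous_of hW1.1 hW1.2)).prodMk
      (continuous_const.mul (cay_continuous_of hW2.1 hW2.2))
  refine ⟨⟨⟨fun s => cpath x y (s : ℝ),
      hγcont.comp continuous_subtype_val⟩, ?_, ?_⟩, ?_⟩
  · show cpath x y ((0 : unitInterval) : ℝ) = x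
    rw [show (((0 : unitInterval)) : ℝ) = (0:ℝ) from rfl]
    simp [cpath, cay_zero]
  · show cpath x y ((1 : unitInterval) : ℝ) = y
    rw [show (((1 : unitInterval)) : ℝ) = (1:ℝ) from rfl]
    have := cay_one hW1.1 hW1.2
    have := cay_one hW2.1 hW2.2
    simp only [cpath, cay_one hW1.1 hW1.2, cay_one hW2.1 hW2.2]
    rw [← Matrix.mul_assoc, ← Matrix.mul_assoc, so3_mul_transpose hx1, so3_mul_transpose hx2,
      Matrix.one_mul, Matrix.one_mul]
  · intro s
    constructor
    · exact ⟨so3_mul hx1 (cay_mem hW1.1 hW1.2 _), so3_mul hx2 (cay_mem hW2.1 hW2.2 _)⟩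
    · by_contra hno
      exact hyN.1 ⟨((y, (s:ℝ)) : (M3 × M3) × ℝ), ⟨hmemS _ s.2, hno⟩, rfl⟩



lemma descend (E : M3 × M3 → ℝ) (x : M3 × M3) (hx : x ∈ SO3 ×ˢ SO3)
    (A B : M3) (hA : Aᵀ = -A) (hB : Bᵀ = -B) (δ : ℝ) (hδ : 0 < δ)
    (hdec : ∀ t ∈ Set.Ioc (0:ℝ) δ,
      E (x.1 * exp (t • A), x.2 * exp (t • B)) < E x) :
    ∃ γ : Path x (x.1 * exp (δ • A), x.2 * exp (δ • B)),
      ∀ s, γ s ∈ SO3 ×ˢ SO3 ∧ E (γ s) ≤ E x := by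
  have c0 : Continuous fun r : ℝ => r * δ := continuous_id.mul continuous_const
  have hcont : Continuous fun r : ℝ =>
      ((x.1 * exp ((r * δ) • A), x.2 * exp ((r * δ) • B)) : M3 × M3) :=
    (continuous_const.mul (exp_cont.comp (c0.smul continuous_const))).prodMk
      (continuous_const.mul (exp_cont.comp (c0.smul continuous_const)))
  refine ⟨⟨⟨fun s => (x.1 * exp (((s : ℝ) * δ) • A), x.2 * exp (((s : ℝ) * δ) • B)),
      hcont.comp continuous_subtype_val⟩, ?_, ?_⟩, ?_⟩
  · show (x.1 * exp ((((0 : unitInterval) : ℝ) * δ) • A),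
      x.2 * exp ((((0 : unitInterval) : ℝ) * δ) • B)) = x
    rw [show (((0 : unitInterval)) : ℝ) = (0:ℝ) from rfl]
    simp [exp_zero]
  · show (x.1 * exp ((((1 : unitInterval) : ℝ) * δ) • A),
      x.2 * exp ((((1 : unitInterval) : ℝ) * δ) • B)) = _
    rw [show (((1 : unitInterval)) : ℝ) = (1:ℝ) from rfl, one_mul]
  · intro s
    constructor
    · exact ⟨so3_mul hx.1 (exp_mem (smul_antisym hA _)),
        so3_mul hx.2 (exp_mem (smul_antisym hB _))⟩
    · show E (x.1 * exp (((s : ℝ) * δ) • A), x.2 * exp (((s : ℝ) * δ) • B)) ≤ E x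
      rcases eq_or_lt_of_le s.2.1 with h0 | h0
      · have hz : ((s : ℝ) * δ) = 0 := by rw [← h0, zero_mul]
        rw [hz]
        simp [exp_zero]
      · exact le_of_lt (hdec _ ⟨mul_pos h0 hδ, mul_le_of_le_one_left hδ.le s.2.2⟩)

lemma seq_or_dec (f : ℝ → ℝ) (c₀ ε : ℝ) (hε : 0 < ε) :
    (∃ t : ℕ → ℝ, (∀ n, t n ∈ Set.Ioc (0:ℝ) ε) ∧ Filter.Tendsto t Filter.atTop (nhds 0) ∧
      ∀ n, c₀ ≤ f (t n)) ∨
    (∃ δ, δ ∈ Set.Ioc (0:ℝ) ε ∧ ∀ t ∈ Set.Ioc (0:ℝ) δ, f t < c₀) := by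
  by_cases hd : ∃ δ, δ ∈ Set.Ioc (0:ℝ) ε ∧ ∀ t ∈ Set.Ioc (0:ℝ) δ, f t < c₀
  · exact Or.inr hd
  · left
    push_neg at hd
    have hmem : ∀ n : ℕ, min ε (1/((n:ℝ)+1)) ∈ Set.Ioc (0:ℝ) ε :=
      fun n => ⟨lt_min hε (by positivity), min_le_left _ _⟩
    choose t ht1 ht2 using fun n => hd _ (hmem n)
    refine ⟨t, fun n => ⟨(ht1 n).1, le_trans (ht1 n).2 (min_le_left _ _)⟩, ?_, ht2⟩
    have hub : ∀ n : ℕ, t n ≤ 1/((n:ℝ)+1) :=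
      fun n => le_trans (ht1 n).2 (min_le_right _ _)
    exact squeeze_zero (fun n => (ht1 n).1.le) hub
      tendsto_one_div_add_atTop_nhds_zero_nat

def ReachSet (E : M3 × M3 → ℝ) (z : M3 × M3) : Set (M3 × M3) :=
  {y | ∃ γ : Path z y, ∀ s, γ s ∈ SO3 ×ˢ SO3 ∧ E (γ s) ≤ E z}

lemma reach_self {E : M3 × M3 → ℝ} {z : M3 × M3} (hz : z ∈ SO3 ×ˢ SO3) :
    z ∈ ReachSet E z :=
  ⟨Path.refl z, fun _ => ⟨hz, le_refl _⟩⟩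

lemma reach_spec {E : M3 × M3 → ℝ} {z y : M3 × M3} (hy : y ∈ ReachSet E z) :
    y ∈ SO3 ×ˢ SO3 ∧ E y ≤ E z := by
  obtain ⟨γ, h⟩ := hy
  have h1 := h 1
  rwa [γ.target] at h1

lemma reach_trans {E : M3 × M3 → ℝ} {z y w : M3 × M3} (hy : y ∈ ReachSet E z)
    (γ₂ : Path y w) (h₂ : ∀ s, γ₂ s ∈ SO3 ×ˢ SO3 ∧ E (γ₂ s) ≤ E z) :
    w ∈ ReachSet E z := by
  obtain ⟨γ₁, h₁⟩ := hy
  refine ⟨γ₁.trans γ₂, fun s => ?_⟩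
  have hmem : (γ₁.trans γ₂) s ∈ Set.range (γ₁.trans γ₂) := Set.mem_range_self s
  rw [Path.trans_range] at hmem
  rcases hmem with h | h
  · obtain ⟨s', hs'⟩ := h; rw [← hs']; exact h₁ s'
  · obtain ⟨s', hs'⟩ := h; rw [← hs']; exact h₂ s'

lemma not_min_descent (E : M3 × M3 → ℝ) (x : M3 × M3)
    (h : ¬ IsLocalPseudoMin E x.1 x.2) :
    ∃ A B δ, Aᵀ = -A ∧ Bᵀ = -B ∧ 0 < δ ∧ ∀ t ∈ Set.Ioc (0:ℝ) δ,
      E (x.1 * exp (t • A), x.2 * exp (t • B)) < E (x.1, x.2) := by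
  have h1 : ¬ ∀ A B : M3, Aᵀ = -A → Bᵀ = -B →
      ((∑ i, ∑ j, (A i j) ^ 2) + (∑ i, ∑ j, (B i j) ^ 2) = 1) →
      ∃ t : ℕ → ℝ, (∀ n, t n ∈ Set.Ioc (0 : ℝ) 1) ∧
        Filter.Tendsto t Filter.atTop (nhds 0) ∧
        ∀ n, E (x.1, x.2) ≤ E (x.1 * exp (t n • A), x.2 * exp (t n • B)) :=
    fun hall => h ⟨1, one_pos, hall⟩
  obtain ⟨A, h2⟩ := not_forall.mp h1
  obtain ⟨B, h3⟩ := not_forall.mp h2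
  obtain ⟨hA, h4⟩ := Classical.not_imp.mp h3
  obtain ⟨hB, h5⟩ := Classical.not_imp.mp h4
  obtain ⟨-, h6⟩ := Classical.not_imp.mp h5
  rcases seq_or_dec (fun t => E (x.1 * exp (t • A), x.2 * exp (t • B)))
    (E (x.1, x.2)) 1 one_pos with hseq | ⟨δ, hδ, hdec⟩
  · exact absurd hseq h6
  · exact ⟨A, B, δ, hA, hB, hδ.1, hdec⟩



end SO3Proof

/-- Any point of `SO(3) × SO(3)` which is not a local pseudo-minimum of a continuous
function `E` can be linked to a local pseudo-minimum of `E` by a continuous path along which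
the value of `E` never exceeds its value at the starting point. -/
theorem stmt0 (E : M3 × M3 → ℝ) (hE : ContinuousOn E (SO3 ×ˢ SO3))
    (U V : M3) (hU : U ∈ SO3) (hV : V ∈ SO3)
    (hnot : ¬ IsLocalPseudoMin E U V) :
    ∃ τ : ℝ → M3 × M3, ContinuousOn τ (Set.Icc 0 1) ∧
      (∀ t ∈ Set.Icc (0 : ℝ) 1, τ t ∈ SO3 ×ˢ SO3) ∧
      τ 0 = (U, V) ∧
      IsLocalPseudoMin E (τ 1).1 (τ 1).2 ∧
      ∀ t ∈ Set.Icc (0 : ℝ) 1, E (τ t) ≤ E (U, V) := by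
  classical
  open SO3Proof NormedSpace in
  have hzK : ((U, V) : M3 × M3) ∈ SO3 ×ˢ SO3 := ⟨hU, hV⟩
  have hzR : ((U, V) : M3 × M3) ∈ SO3Proof.ReachSet E (U, V) := SO3Proof.reach_self hzK
  have hLclosed : IsClosed ((SO3 ×ˢ SO3) ∩ E ⁻¹' Set.Iic (E (U, V))) :=
    hE.preimage_isClosed_of_isClosed SO3Proof.K2_closed isClosed_Iic
  have hRL : SO3Proof.ReachSet E (U, V) ⊆ (SO3 ×ˢ SO3) ∩ E ⁻¹' Set.Iic (E (U, V)) :=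
    fun y hy => ⟨(SO3Proof.reach_spec hy).1, (SO3Proof.reach_spec hy).2⟩
  have hclosL : closure (SO3Proof.ReachSet E (U, V)) ⊆
      (SO3 ×ˢ SO3) ∩ E ⁻¹' Set.Iic (E (U, V)) := closure_minimal hRL hLclosed
  have hclosK : closure (SO3Proof.ReachSet E (U, V)) ⊆ SO3 ×ˢ SO3 :=
    fun y hy => (hclosL hy).1
  have hcompact : IsCompact (closure (SO3Proof.ReachSet E (U, V))) :=
    SO3Proof.K2_compact.of_isClosed_subset isClosed_closure hclosK
  obtain ⟨xs, hxsmem, hxsmin⟩ :=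
    hcompact.exists_isMinOn ⟨(U, V), subset_closure hzR⟩ (hE.mono hclosK)
  rw [isMinOn_iff] at hxsmin
  have hxsK : xs ∈ SO3 ×ˢ SO3 := hclosK hxsmem
  have hxsc : E xs ≤ E (U, V) := (hclosL hxsmem).2
  -- Step D : E xs < E (U, V)
  have hvc : E xs < E (U, V) := by
    obtain ⟨A, B, δ, hA, hB, hδ, hdec⟩ := SO3Proof.not_min_descent E (U, V) hnot
    obtain ⟨γd, hγd⟩ := SO3Proof.descend E (U, V) hzK A B hA hB δ hδ hdec
    have hyR : ((U * NormedSpace.exp (δ • A), V * NormedSpace.exp (δ • B)) : M3 × M3) ∈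
        SO3Proof.ReachSet E (U, V) := SO3Proof.reach_trans hzR γd hγd
    have h1 := hxsmin _ (subset_closure hyR)
    have h2 := hdec δ ⟨hδ, le_rfl⟩
    exact lt_of_le_of_lt h1 h2
  -- Step E : xs ∈ ReachSet
  obtain ⟨O, hOopen, hxsO, hOsub⟩ : ∃ O : Set (M3 × M3), IsOpen O ∧ xs ∈ O ∧
      O ∩ (SO3 ×ˢ SO3) ⊆ E ⁻¹' Set.Iio (E (U, V)) := by
    have hnh : E ⁻¹' Set.Iio (E (U, V)) ∈ nhdsWithin xs (SO3 ×ˢ SO3) :=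
      (hE xs hxsK) (Iio_mem_nhds hvc)
    rwa [mem_nhdsWithin] at hnh
  obtain ⟨N, hNopen, hxsN, hconn⟩ := SO3Proof.connect xs hxsK O hOopen hxsO
  obtain ⟨y, hyN, hyR⟩ := mem_closure_iff.mp hxsmem N hNopen hxsN
  obtain ⟨γc, hγc⟩ := hconn y (SO3Proof.reach_spec hyR).1 hyN
  have hγc' : ∀ s, (γc.symm) s ∈ SO3 ×ˢ SO3 ∧ E ((γc.symm) s) ≤ E (U, V) := by
    intro s
    have hmem : (γc.symm) s ∈ Set.range γc := by
      rw [← Path.symm_range]; exact Set.mem_range_self s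
    obtain ⟨s', hs'⟩ := hmem
    rw [← hs']
    exact ⟨(hγc s').1, le_of_lt (hOsub ⟨(hγc s').2, (hγc s').1⟩)⟩
  have hxsR : xs ∈ SO3Proof.ReachSet E (U, V) := SO3Proof.reach_trans hyR γc.symm hγc'
  -- Step F : xs is a local pseudo-minimum
  have hmin : IsLocalPseudoMin E xs.1 xs.2 := by
    refine ⟨1, one_pos, ?_⟩
    intro A B hA hB _
    rcases SO3Proof.seq_or_dec
      (fun t => E (xs.1 * NormedSpace.exp (t • A), xs.2 * NormedSpace.exp (t • B)))
      (E (xs.1, xs.2)) 1 one_pos with hseq | ⟨δ, hδ, hdec⟩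
    · exact hseq
    · exfalso
      obtain ⟨γd, hγd⟩ := SO3Proof.descend E xs hxsK A B hA hB δ hδ.1 hdec
      have hzR2 : ((xs.1 * NormedSpace.exp (δ • A),
          xs.2 * NormedSpace.exp (δ • B)) : M3 × M3) ∈ SO3Proof.ReachSet E (U, V) :=
        SO3Proof.reach_trans hxsR γd (fun s => ⟨(hγd s).1, le_trans (hγd s).2 hxsc⟩)
      have h1 := hxsmin _ (subset_closure hzR2)
      have h2 := hdec δ ⟨hδ.1, le_rfl⟩
      exact absurd h1 (not_le.mpr h2)
  -- Step G : conclusion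
  obtain ⟨γ, hγ⟩ := hxsR
  refine ⟨γ.extend, γ.continuous_extend.continuousOn, ?_, ?_, ?_, ?_⟩
  · intro t ht
    rw [Path.extend_apply γ ht]
    exact (hγ _).1
  · exact γ.extend_zero
  · rw [Path.extend_one]
    exact hmin
  · intro t ht
    rw [Path.extend_apply γ ht]
    exact (hγ _).2
end
end

section
/- Let O be a nonzero symmetric trilinear form on ℝ³ and let G be a subgroup of SO(3) that has no one-dimensional invariant subspace, i.e., for every nonzero v ∈ ℝ³ there exists U ∈ G with Uv ∉ ℝ·v. Suppose O is invariant under G, i.e., O(Uu, Uv, Uw) = O(u,v,w) for all U ∈ G and all u,v,w ∈ ℝ³. Then for every v ∈ ℝ³, if O(v,w,u) = 0 for all w,u ∈ ℝ³, then v = 0. -/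
open Matrix

abbrev V3 := Fin 3 → ℝ
noncomputable def eucEquiv : EuclideanSpace ℝ (Fin 3) ≃ₗ[ℝ] V3 :=
  WithLp.linearEquiv 2 ℝ (Fin 3 → ℝ)

/-- If a nonzero symmetric trilinear form `O` on `ℝ³` is invariant under a subgroup `G` of
`SO(3)` having no one-dimensional invariant subspace, then `O (v, ·, ·) ≡ 0` implies `v = 0`. -/
theorem stmt1 (O : V3 → V3 → V3 → ℝ)
    (hlin : ∀ (c : ℝ) (u u' v w : V3), O (c • u + u') v w = c * O u v w + O u' v w)
    (hsym12 : ∀ u v w, O u v w = O v u w)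
    (hsym23 : ∀ u v w, O u v w = O u w v)
    (hO : O ≠ 0)
    (G : Set M3) (hGsub : G ⊆ SO3) (hone : (1 : M3) ∈ G)
    (hmul : ∀ U ∈ G, ∀ V ∈ G, U * V ∈ G)
    (hinv : ∀ U ∈ G, Uᵀ ∈ G)
    (hnoinvsub : ∀ v : V3, v ≠ 0 → ∃ U ∈ G, ¬ ∃ c : ℝ, U.mulVec v = c • v)
    (hinvar : ∀ U ∈ G, ∀ u v w, O (U.mulVec u) (U.mulVec v) (U.mulVec w) = O u v w) :
    ∀ v : V3, (∀ w u, O v w u = 0) → v = 0 := by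
  intro v hv
  by_contra hv0
  -- O vanishes at 0 in the first argument
  have hzero : ∀ w u : V3, O 0 w u = 0 := by
    intro w u
    have h := hlin 1 0 0 w u
    simp only [one_smul, add_zero, one_mul] at h
    linarith
  -- the kernel submodule
  let K : Submodule ℝ V3 :=
    { carrier := {x | ∀ w u, O x w u = 0}
      zero_mem' := hzero
      add_mem' := by
        intro a b ha hb w u
        have h := hlin 1 a b w u
        simp only [one_smul, one_mul] at h
        rw [h, ha, hb]; ring
      smul_mem' := by
        intro c a ha w u
        have h := hlin c a 0 w u
        simp only [add_zero] at h
        rw [h, ha, hzero]; ring }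
  have hvK : v ∈ K := hv
  -- invariance of K under G
  have hUU : ∀ U ∈ G, ∀ x : V3, U.mulVec (Uᵀ.mulVec x) = x := by
    intro U hU x
    rw [Matrix.mulVec_mulVec, mul_eq_one_comm.mp (hGsub hU).1, Matrix.one_mulVec]
  have hKinv : ∀ U ∈ G, ∀ x ∈ K, U.mulVec x ∈ K := by
    intro U hU x hx w u
    have := hinvar U hU x (Uᵀ.mulVec w) (Uᵀ.mulVec u)
    rw [hUU U hU w, hUU U hU u] at this
    rw [this]
    exact hx _ _
  -- key: no 1-dimensional G-invariant subspace
  have key : ∀ L : Submodule ℝ V3, Module.finrank ℝ L = 1 →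
      (∀ U ∈ G, ∀ x ∈ L, U.mulVec x ∈ L) → False := by
    intro L hL1 hLinv
    have hLbot : L ≠ ⊥ := by
      intro h; rw [h] at hL1; simp at hL1
    obtain ⟨x0, hx0L, hx0⟩ := Submodule.exists_mem_ne_zero_of_ne_bot hLbot
    have hspan : Submodule.span ℝ {x0} = L := by
      apply Submodule.eq_of_le_of_finrank_le
      · rwa [Submodule.span_singleton_le_iff_mem]
      · rw [hL1, finrank_span_singleton hx0]
    obtain ⟨U, hU, hc⟩ := hnoinvsub x0 hx0
    apply hc
    have : U.mulVec x0 ∈ Submodule.span ℝ {x0} := by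
      rw [hspan]; exact hLinv U hU x0 hx0L
    obtain ⟨c, hc'⟩ := Submodule.mem_span_singleton.mp this
    exact ⟨c, hc'.symm⟩
  -- dimension analysis
  have hfin3 : Module.finrank ℝ V3 = 3 := by simp
  have hKle : Module.finrank ℝ K ≤ 3 := by
    have := Submodule.finrank_le K
    rwa [hfin3] at this
  have hKpos : 0 < Module.finrank ℝ K := by
    refine Nat.pos_of_ne_zero fun h => hv0 ?_
    have hb : K = ⊥ := Submodule.finrank_eq_zero.mp h
    rw [hb] at hvK
    exact hvK
  have hKne3 : Module.finrank ℝ K ≠ 3 := by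
    intro h3
    have hKtop : K = ⊤ := Submodule.eq_top_of_finrank_eq (by rw [h3, hfin3])
    apply hO
    funext a b c
    have : a ∈ K := hKtop ▸ Submodule.mem_top
    exact this b c
  interval_cases h : Module.finrank ℝ K
  · -- finrank K = 1
    exact key K h hKinv
  · -- finrank K = 2 : pass to the orthogonal complement
    set K' : Submodule ℝ (EuclideanSpace ℝ (Fin 3)) := K.comap eucEquiv.toLinearMap with hK'
    have hK'rank : Module.finrank ℝ K' = 2 := by
      rw [hK', Submodule.comap_equiv_eq_map_symm, LinearEquiv.finrank_map_eq, h]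
    have hperp_rank : Module.finrank ℝ K'ᗮ = 1 := by
      have := Submodule.finrank_add_finrank_orthogonal (K := K')
      simp only [hK'rank, finrank_euclideanSpace, Fintype.card_fin] at this
      omega
    -- inner product on EuclideanSpace as dot product
    have hinner : ∀ x y : EuclideanSpace ℝ (Fin 3),
        (inner ℝ x y : ℝ) = (eucEquiv x) ⬝ᵥ (eucEquiv y) := by
      intro x y
      simp [PiLp.inner_apply, dotProduct, eucEquiv, mul_comm]
    set L : Submodule ℝ V3 := K'ᗮ.map eucEquiv.toLinearMap with hLdef
    have hLrank : Module.finrank ℝ L = 1 := by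
      rw [hLdef, LinearEquiv.finrank_map_eq, hperp_rank]
    refine key L hLrank ?_
    intro U hU x hx
    obtain ⟨x', hx', rfl⟩ := hx
    refine ⟨eucEquiv.symm (U.mulVec (eucEquiv x')), ?_, by simp⟩
    show eucEquiv.symm (U.mulVec (eucEquiv x')) ∈ K'ᗮ
    rw [Submodule.mem_orthogonal]
    intro y hy
    rw [hinner]
    simp only [LinearEquiv.apply_symm_apply]
    have hstep : (eucEquiv y) ⬝ᵥ (U.mulVec (eucEquiv x')) =
        (Uᵀ.mulVec (eucEquiv y)) ⬝ᵥ (eucEquiv x') := by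
      rw [Matrix.dotProduct_mulVec, ← Matrix.mulVec_transpose]
    rw [hstep]
    have hyK : eucEquiv y ∈ K := Submodule.mem_comap.mp hy
    have hUty : Uᵀ.mulVec (eucEquiv y) ∈ K := hKinv Uᵀ (hinv U hU) _ hyK
    have hmem : eucEquiv.symm (Uᵀ.mulVec (eucEquiv y)) ∈ K' := by
      rw [hK', Submodule.mem_comap]
      simpa using hUty
    have hx'' : x' ∈ K'ᗮ := hx'
    have hfin := (Submodule.mem_orthogonal _ _).mp hx'' _ hmem
    rw [hinner] at hfin
    simpa using hfin
  · -- finrank K = 3 : contradiction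
    exact hKne3 rfl
end

section
/- Let (p₁,p₂) ∈ S²×S². If for every unit-speed geodesic γ of S²×S² with γ(0) = (p₁,p₂) one has |(f∘γ)′(0)| ≤ 1/3 and (f∘γ)″(0) ≥ −1/3, then f(p₁,p₂) ≤ −2√2/3. (That is, at any point of the dipole-dipole interaction where the gradient has norm at most 1/3 and the Hessian is bounded below by −1/3, the value of f is at most −2√2/3.) -/
noncomputable section
open Real

abbrev E3 := EuclideanSpace ℝ (Fin 3)

/-- The first standard basis vector of `ℝ³`. -/
def e1 : E3 := EuclideanSpace.single 0 1

/-- The Euclidean dot product on `ℝ³`. -/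
def dot (u v : E3) : ℝ := ∑ i, u i * v i

/-- The dipole-dipole interaction `f(p₁,p₂) = p₁·p₂ − 3(p₁·e₁)(p₂·e₁)`. -/
def f (p₁ p₂ : E3) : ℝ := dot p₁ p₂ - 3 * (dot p₁ e1) * (dot p₂ e1)

/-- The spherical geodesic `t ↦ cos(at)·e + sin(at)·u`. -/
def geod (e u : E3) (a t : ℝ) : E3 := cos (a * t) • e + sin (a * t) • u

/- Auxiliary lemmas -/

lemma dot_comm (x y : E3) : dot x y = dot y x := by
  simp [dot, mul_comm]

lemma dot_comb_left (c s : ℝ) (x u w : E3) :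
    dot (c • x + s • u) w = c * dot x w + s * dot u w := by
  simp [dot, Finset.mul_sum, add_mul, Finset.sum_add_distrib, mul_assoc]

lemma dot_comb_right (c s : ℝ) (x u w : E3) :
    dot w (c • x + s • u) = c * dot w x + s * dot w u := by
  rw [dot_comm, dot_comb_left, dot_comm x, dot_comm u]

lemma dot_sub_left (x y w : E3) : dot (x - y) w = dot x w - dot y w := by
  simp [dot, sub_mul, Finset.sum_sub_distrib]

lemma dot_smul_left (c : ℝ) (x w : E3) : dot (c • x) w = c * dot x w := by
  simp [dot, Finset.mul_sum, mul_assoc]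

lemma dot_self (x : E3) : dot x x = ‖x‖ ^ 2 := by
  rw [EuclideanSpace.norm_eq, Real.sq_sqrt (by positivity)]
  simp [dot, sq]

lemma dot_e1_e1 : dot e1 e1 = 1 := by
  simp [dot, e1, Fin.sum_univ_three, EuclideanSpace.single_apply]

lemma dot_sub_right (x y w : E3) : dot w (x - y) = dot w x - dot w y := by
  rw [dot_comm, dot_sub_left, dot_comm x, dot_comm y]

lemma dot_add_right (x y w : E3) : dot w (x + y) = dot w x + dot w y := by
  simp [dot, mul_add, Finset.sum_add_distrib]

lemma dot_smul_right (c : ℝ) (x w : E3) : dot w (c • x) = c * dot w x := by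
  rw [dot_comm, dot_smul_left, dot_comm x]

/-- The general form of `f` along a pair of geodesics. -/
def G (a b F C1 C2 C3 : ℝ) : ℝ → ℝ := fun t =>
  cos (a*t) * cos (b*t) * F + cos (a*t) * sin (b*t) * C1 +
  sin (a*t) * cos (b*t) * C2 + sin (a*t) * sin (b*t) * C3

lemma f_comb (c s c' s' : ℝ) (x u y v : E3) :
    f (c • x + s • u) (c' • y + s' • v) =
      c*c'*f x y + c*s'*f x v + s*c'*f u y + s*s'*f u v := by
  simp only [f, dot_comb_left, dot_comb_right]
  ring

lemma f_geod (a b : ℝ) (x u y v : E3) :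
    (fun t => f (geod x u a t) (geod y v b t)) =
      G a b (f x y) (f x v) (f u y) (f u v) := by
  funext t
  show f (cos (a*t) • x + sin (a*t) • u) (cos (b*t) • y + sin (b*t) • v) = _
  rw [f_comb]
  simp only [G]

lemma hasDerivAt_G (a b F C1 C2 C3 t : ℝ) :
    HasDerivAt (G a b F C1 C2 C3)
      (G a b (b*C1 + a*C2) (a*C3 - b*F) (b*C3 - a*F) (-(a*C1 + b*C2)) t) t := by
  have ha : HasDerivAt (fun s : ℝ => a * s) a t := by
    simpa using (hasDerivAt_id t).const_mul a
  have hb : HasDerivAt (fun s : ℝ => b * s) b t := by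
    simpa using (hasDerivAt_id t).const_mul b
  have hca := ha.cos
  have hcb := hb.cos
  have hsa := ha.sin
  have hsb := hb.sin
  have h := ((((hca.mul hcb).mul_const F).add ((hca.mul hsb).mul_const C1)).add
      ((hsa.mul hcb).mul_const C2)).add ((hsa.mul hsb).mul_const C3)
  refine h.congr_deriv ?_
  simp only [G]
  ring

lemma deriv_G (a b F C1 C2 C3 : ℝ) :
    deriv (G a b F C1 C2 C3) =
      G a b (b*C1 + a*C2) (a*C3 - b*F) (b*C3 - a*F) (-(a*C1 + b*C2)) :=
  funext fun t => (hasDerivAt_G a b F C1 C2 C3 t).deriv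

lemma G_zero (a b F C1 C2 C3 : ℝ) : G a b F C1 C2 C3 0 = F := by
  simp [G]

lemma first_deriv (a b : ℝ) (x u y v : E3) :
    deriv (fun t => f (geod x u a t) (geod y v b t)) 0 = b * f x v + a * f u y := by
  rw [f_geod, deriv_G, G_zero]

lemma second_deriv (a b : ℝ) (x u y v : E3) :
    deriv (deriv (fun t => f (geod x u a t) (geod y v b t))) 0 =
      2*a*b*(f u v) - (a^2 + b^2) * f x y := by
  rw [f_geod, deriv_G, deriv_G, G_zero]
  ring

lemma dot_eq_inner (x y : E3) : dot x y = (inner ℝ x y : ℝ) := by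
  simp [dot, PiLp.inner_apply, RCLike.inner_apply, mul_comm]

lemma exists_unit_orth (p : E3) (hp : ‖p‖ = 1) : ∃ v : E3, ‖v‖ = 1 ∧ dot v p = 0 := by
  have hp0 : p ≠ 0 := by intro h; rw [h, norm_zero] at hp; norm_num at hp
  have h1 : Module.finrank ℝ (ℝ ∙ p) = 1 := finrank_span_singleton hp0
  have h3 : Module.finrank ℝ E3 = 3 := finrank_euclideanSpace_fin
  have horth := Submodule.finrank_add_finrank_orthogonal (𝕜 := ℝ) (ℝ ∙ p)
  have hne : (ℝ ∙ p)ᗮ ≠ ⊥ := by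
    intro h
    rw [h, finrank_bot] at horth
    omega
  obtain ⟨x, hx, hx0⟩ := Submodule.exists_mem_ne_zero_of_ne_bot hne
  refine ⟨‖x‖⁻¹ • x, ?_, ?_⟩
  · rw [norm_smul, norm_inv, norm_norm, inv_mul_cancel₀ (norm_ne_zero_iff.mpr hx0)]
  · rw [dot_smul_left, dot_eq_inner]
    have h0 : (inner ℝ p x : ℝ) = 0 := hx p (Submodule.mem_span_singleton_self p)
    rw [real_inner_comm] at h0
    rw [h0, mul_zero]

set_option maxHeartbeats 1000000 in
/-- If at `(p₁, p₂) ∈ S² × S²` every unit-speed geodesic `γ` of `S² × S²` through `(p₁, p₂)`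
satisfies `|(f∘γ)′(0)| ≤ 1/3` and `(f∘γ)″(0) ≥ −1/3`, then `f(p₁,p₂) ≤ −2√2/3`. -/
theorem stmt3 (p₁ p₂ : E3) (h₁ : ‖p₁‖ = 1) (h₂ : ‖p₂‖ = 1)
    (H : ∀ (a b : ℝ) (u v : E3), a ^ 2 + b ^ 2 = 1 → ‖u‖ = 1 → ‖v‖ = 1 →
      dot u p₁ = 0 → dot v p₂ = 0 →
      |deriv (fun t => f (geod p₁ u a t) (geod p₂ v b t)) 0| ≤ 1 / 3 ∧
      -(1 / 3 : ℝ) ≤ deriv (deriv (fun t => f (geod p₁ u a t) (geod p₂ v b t))) 0) :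
    f p₁ p₂ ≤ -(2 * Real.sqrt 2) / 3 := by
  obtain ⟨u0, hu0n, hu0p⟩ := exists_unit_orth p₁ h₁
  obtain ⟨v0, hv0n, hv0p⟩ := exists_unit_orth p₂ h₂
  set F : ℝ := f p₁ p₂ with hF
  have hs2 : Real.sqrt 2 ^ 2 = 2 := Real.sq_sqrt (by norm_num)
  have hs2pos : (0:ℝ) < Real.sqrt 2 := Real.sqrt_pos.mpr (by norm_num)
  have hinv : ((Real.sqrt 2)⁻¹ : ℝ) ^ 2 = 1/2 := by
    rw [inv_pow, hs2]; norm_num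
  have hq : ((Real.sqrt 2)⁻¹ : ℝ) ^ 2 + ((Real.sqrt 2)⁻¹ : ℝ) ^ 2 = 1 := by
    rw [hinv]; norm_num
  have hq' : ((Real.sqrt 2)⁻¹ : ℝ) ^ 2 + (-(Real.sqrt 2)⁻¹ : ℝ) ^ 2 = 1 := by
    rw [neg_pow]; simp [hinv]; norm_num
  -- Step A : F ≤ 1/3
  have HA := (H (Real.sqrt 2)⁻¹ (Real.sqrt 2)⁻¹ u0 v0 hq hu0n hv0n hu0p hv0p).2
  have HB := (H (Real.sqrt 2)⁻¹ (-(Real.sqrt 2)⁻¹) u0 v0 hq' hu0n hv0n hu0p hv0p).2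
  rw [second_deriv, hq] at HA
  rw [second_deriv, hq'] at HB
  have hFle : F ≤ 1/3 := by rw [hF]; linarith [HA, HB]
  -- Step B : 8/9 ≤ F^2
  obtain ⟨w, hw⟩ : ∃ w : E3, w = p₂ - (3 * dot p₂ e1) • e1 := ⟨_, rfl⟩
  have hdotw : ∀ x : E3, f x p₂ = dot x w := by
    intro x
    rw [hw, dot_sub_right, dot_smul_right, f]
    ring
  have hp1w : dot p₁ w = F := (hdotw p₁).symm
  have h22 : dot p₂ p₂ = 1 := by rw [dot_self, h₂]; norm_num
  have h11 : dot p₁ p₁ = 1 := by rw [dot_self, h₁]; norm_num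
  have hww : dot w w = 1 + 3 * (dot p₂ e1)^2 := by
    rw [hw]
    simp only [dot_sub_left, dot_sub_right, dot_smul_left, dot_smul_right, dot_e1_e1, h22,
      dot_comm e1 p₂]
    ring
  obtain ⟨z, hz⟩ : ∃ z : E3, z = w - F • p₁ := ⟨_, rfl⟩
  have hwp1 : dot w p₁ = F := by rw [dot_comm]; exact hp1w
  have hzp1 : dot z p₁ = 0 := by
    rw [hz, dot_sub_left, dot_smul_left, h11, hwp1]; ring
  have hzz : dot z z = dot w w - F^2 := by
    rw [hz]
    simp only [dot_sub_left, dot_sub_right, dot_smul_left, dot_smul_right, h11, hp1w, hwp1]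
    ring
  have hF2 : 8/9 ≤ F^2 := by
    by_cases hz0 : z = 0
    · have hzz0 : dot z z = 0 := by rw [hz0]; simp [dot]
      rw [hzz0] at hzz
      linarith [sq_nonneg (dot p₂ e1)]
    · have hzn : ‖z‖ ≠ 0 := norm_ne_zero_iff.mpr hz0
      obtain ⟨u, hu⟩ : ∃ u : E3, u = ‖z‖⁻¹ • z := ⟨_, rfl⟩
      have hun : ‖u‖ = 1 := by
        rw [hu, norm_smul, norm_inv, norm_norm, inv_mul_cancel₀ hzn]
      have hup : dot u p₁ = 0 := by rw [hu, dot_smul_left, hzp1, mul_zero]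
      have HD := (H 1 0 u v0 (by norm_num) hun hv0n hup hv0p).1
      rw [first_deriv] at HD
      have hwz : w = z + F • p₁ := by rw [hz]; abel
      have hfu : f u p₂ = ‖z‖ := by
        rw [hdotw u, hu, dot_smul_left, hwz, dot_add_right, dot_smul_right, hzp1, dot_self]
        field_simp
        ring
      rw [hfu] at HD
      simp only [zero_mul, one_mul, zero_add] at HD
      have hzle : ‖z‖ ≤ 1/3 := by
        have := abs_le.mp HD
        linarith [this.2]
      have : dot z z ≤ 1/9 := by
        rw [dot_self]
        nlinarith [norm_nonneg z]
      linarith [sq_nonneg (dot p₂ e1)]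
  -- conclude
  by_contra hc
  push_neg at hc
  have h1le : (1:ℝ) ≤ Real.sqrt 2 := by nlinarith
  have hp1 : 0 < F + 2 * Real.sqrt 2 / 3 := by
    have : -(2 * Real.sqrt 2) / 3 < F := hc
    linarith
  have hp2 : 0 < 2 * Real.sqrt 2 / 3 - F := by linarith
  nlinarith [mul_pos hp1 hp2]
end
end

section
/- For every δ with 0 < δ < 1/2, the set {(p₁,p₂) ∈ S²×S² : f(p₁,p₂) < −δ} is nonempty and path-connected. -/
noncomputable section

open RealInnerProductSpace

lemma dot_eq_inner_s4 (u v : E3) : dot u v = ⟪u, v⟫ := by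
  simp [dot, PiLp.inner_apply, RCLike.inner_apply, mul_comm]

lemma dot_e1 (p : E3) : dot p e1 = p 0 := by
  simp [dot, e1, EuclideanSpace.single_apply]

lemma inner_e1 (p : E3) : ⟪e1, p⟫ = p 0 := by
  rw [← dot_eq_inner_s4, dot, ]
  simp [e1, EuclideanSpace.single_apply]

lemma norm_e1 : ‖e1‖ = 1 := by
  simp [e1]

/-- The linear map `p ↦ p − 3(p·e₁)e₁`, so `f p₁ p₂ = ⟪g p₁, p₂⟫`. -/
def g (p : E3) : E3 := p - (3 * p 0) • e1

lemma f_eq_inner (p₁ p₂ : E3) : f p₁ p₂ = ⟪g p₁, p₂⟫ := by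
  rw [f, g, inner_sub_left, real_inner_smul_left, inner_e1, dot_eq_inner_s4, dot_e1, dot_e1]

lemma norm_g_sq (p : E3) : ⟪g p, g p⟫ = ‖p‖ ^ 2 + 3 * (p 0) ^ 2 := by
  have h1 : ⟪p, e1⟫ = p 0 := by rw [real_inner_comm]; exact inner_e1 p
  simp only [g]
  simp only [inner_sub_left, inner_sub_right, real_inner_smul_left, real_inner_smul_right,
    inner_e1, h1, real_inner_self_eq_norm_sq]
  have h2 : ‖(3 * p 0) • e1‖ ^ 2 = 9 * p 0 ^ 2 := by
    rw [norm_smul, norm_e1, mul_one, Real.norm_eq_abs, sq_abs]; ring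
  rw [h2]; ring

lemma one_le_norm_g {p : E3} (hp : ‖p‖ = 1) : 1 ≤ ‖g p‖ := by
  have h := norm_g_sq p
  rw [real_inner_self_eq_norm_sq, hp] at h
  nlinarith [norm_nonneg (g p), sq_nonneg (p 0)]

lemma continuous_g : Continuous g := by
  have h0 : Continuous fun p : E3 => p 0 := (EuclideanSpace.proj (0 : Fin 3)).continuous
  exact continuous_id.sub ((continuous_const.mul h0).smul continuous_const)

/-- Best response: the antipode of the normalized `g p`. -/
def s (p : E3) : E3 := -(‖g p‖⁻¹ • g p)

lemma norm_s {p : E3} (hp : ‖p‖ = 1) : ‖s p‖ = 1 := by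
  have h := one_le_norm_g hp
  rw [s, norm_neg, norm_smul, norm_inv, norm_norm, inv_mul_cancel₀ (by linarith)]

lemma f_s {p : E3} (hp : ‖p‖ = 1) : f p (s p) = -‖g p‖ := by
  rw [f_eq_inner, s, inner_neg_right, real_inner_smul_right, real_inner_self_eq_norm_sq]
  have h := one_le_norm_g hp
  field_simp

lemma s_e1 : s e1 = e1 := by
  have h0 : (e1 : E3) 0 = 1 := by simp [e1]
  have hg : g e1 = (-2 : ℝ) • e1 := by rw [g, h0]; module
  have hn : ‖g e1‖ = 2 := by rw [hg, norm_smul, norm_e1]; norm_num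
  rw [s, hn, hg]
  module

/-- For every `0 < δ < 1/2` the sublevel set `{(p₁,p₂) ∈ S² × S² : f(p₁,p₂) < −δ}` of the
dipole-dipole interaction is nonempty and path-connected. -/
theorem stmt4 (δ : ℝ) (hδ0 : 0 < δ) (hδ1 : δ < 1 / 2) :
    ({q : E3 × E3 | ‖q.1‖ = 1 ∧ ‖q.2‖ = 1 ∧ f q.1 q.2 < -δ}).Nonempty ∧
      IsPathConnected {q : E3 × E3 | ‖q.1‖ = 1 ∧ ‖q.2‖ = 1 ∧ f q.1 q.2 < -δ} := by
  set S : Set (E3 × E3) := {q : E3 × E3 | ‖q.1‖ = 1 ∧ ‖q.2‖ = 1 ∧ f q.1 q.2 < -δ} with hS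
  have he1 : ‖e1‖ = 1 := norm_e1
  have hfe1 : f e1 e1 = -2 := by
    have hd : dot e1 e1 = 1 := by rw [dot_e1]; simp [e1]
    rw [f, hd]; norm_num
  have hmem : (e1, e1) ∈ S := ⟨he1, he1, by rw [hfe1]; linarith⟩
  refine ⟨⟨_, hmem⟩, ?_⟩
  -- Step B: for any `p₁` on the sphere, `(p₁, s p₁)` is joined to `(e1, e1)` in `S`.
  have rank3 : (1:Cardinal) < Module.rank ℝ E3 := by
    have : Module.rank ℝ E3 = Module.finrank ℝ E3 := (Module.finrank_eq_rank ℝ E3).symm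
    rw [this, finrank_euclideanSpace_fin]; norm_num
  have base : ∀ p₁ : E3, ‖p₁‖ = 1 → JoinedIn S (p₁, s p₁) (e1, e1) := by
    intro p₁ h1
    have hsph := isPathConnected_sphere rank3 (0 : E3) (by norm_num : (0:ℝ) ≤ 1)
    obtain ⟨γ, hγ⟩ := hsph.joinedIn p₁ (mem_sphere_zero_iff_norm.mpr h1) e1
      (mem_sphere_zero_iff_norm.mpr he1)
    have hγmem : ∀ t, ‖γ t‖ = 1 := fun t => mem_sphere_zero_iff_norm.mp (hγ t)
    have hcg : Continuous fun t : unitInterval => g (γ t) := continuous_g.comp γ.continuous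
    have hne : ∀ t : unitInterval, ‖g (γ t)‖ ≠ 0 := by
      intro t
      have := one_le_norm_g (hγmem t); positivity
    have hcs : Continuous fun t : unitInterval => s (γ t) := by
      simp only [s]
      exact ((hcg.norm.inv₀ hne).smul hcg).neg
    refine ⟨⟨⟨fun t => (γ t, s (γ t)), γ.continuous.prodMk hcs⟩, ?_, ?_⟩, ?_⟩
    · simp [γ.source]
    · simp [γ.target, s_e1]
    · intro t
      refine ⟨hγmem t, norm_s (hγmem t), ?_⟩
      show f (γ t) (s (γ t)) < -δ
      rw [f_s (hγmem t)]
      have := one_le_norm_g (hγmem t); linarith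
  -- Step A: fiber path
  have fiber : ∀ p₁ p₂ : E3, ‖p₁‖ = 1 → ‖p₂‖ = 1 → f p₁ p₂ < -δ →
      JoinedIn S (p₁, p₂) (p₁, s p₁) := by
    intro p₁ p₂ h1 h2 hf
    set c : ℝ → E3 := fun t => (1 - t) • p₂ + t • s p₁ with hcdef
    have hcont : Continuous c :=
      ((continuous_const.sub continuous_id).smul continuous_const).add
        (continuous_id.smul continuous_const)
    have hgp : 1 ≤ ‖g p₁‖ := one_le_norm_g h1
    have hfp : ⟪g p₁, p₂⟫ < -δ := by rw [← f_eq_inner]; exact hf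
    have hinner : ∀ t : ℝ, 0 ≤ t → t ≤ 1 → ⟪g p₁, c t⟫ < -δ := by
      intro t ht0 ht1
      have e : ⟪g p₁, c t⟫ = (1 - t) * ⟪g p₁, p₂⟫ + t * ⟪g p₁, s p₁⟫ := by
        simp only [hcdef, inner_add_right, real_inner_smul_right]
      have hfs : ⟪g p₁, s p₁⟫ = -‖g p₁‖ := by rw [← f_eq_inner]; exact f_s h1
      rw [e, hfs]
      rcases eq_or_lt_of_le ht0 with h | h
      · rw [← h]; simpa using hfp
      · nlinarith [mul_nonneg (by linarith : (0:ℝ) ≤ 1 - t)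
          (by linarith : (0:ℝ) ≤ -δ - ⟪g p₁, p₂⟫),
          mul_nonneg ht0 (by linarith : (0:ℝ) ≤ ‖g p₁‖ - 1),
          mul_pos h (by linarith : (0:ℝ) < 1 - δ)]
    have hcne : ∀ t : ℝ, 0 ≤ t → t ≤ 1 → c t ≠ 0 := by
      intro t ht0 ht1 h0
      have := hinner t ht0 ht1
      rw [h0, inner_zero_right] at this
      linarith
    have hcle : ∀ t : ℝ, 0 ≤ t → t ≤ 1 → ‖c t‖ ≤ 1 := by
      intro t ht0 ht1
      calc ‖c t‖ ≤ ‖(1 - t) • p₂‖ + ‖t • s p₁‖ := norm_add_le _ _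
        _ = (1 - t) + t := by
            rw [norm_smul, norm_smul, h2, norm_s h1, Real.norm_eq_abs, Real.norm_eq_abs,
              abs_of_nonneg (by linarith), abs_of_nonneg ht0]; ring
        _ = 1 := by ring
    have hneI : ∀ t : unitInterval, ‖c ↑t‖ ≠ 0 := fun t =>
      norm_ne_zero_iff.mpr (hcne t t.2.1 t.2.2)
    have hcI : Continuous fun t : unitInterval => c ↑t := hcont.comp continuous_subtype_val
    have hcont2 : Continuous fun t : unitInterval => ‖c ↑t‖⁻¹ • c ↑t :=
      (hcI.norm.inv₀ hneI).smul hcI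
    refine ⟨⟨⟨fun t => (p₁, ‖c ↑t‖⁻¹ • c ↑t), continuous_const.prodMk hcont2⟩, ?_, ?_⟩, ?_⟩
    · simp [hcdef, h2]
    · simp [hcdef, norm_s h1]
    · intro t
      have ht0 : (0:ℝ) ≤ ↑t := t.2.1
      have ht1 : (↑t:ℝ) ≤ 1 := t.2.2
      have hne := hcne ↑t ht0 ht1
      have hpos : 0 < ‖c ↑t‖ := norm_pos_iff.mpr hne
      have hnorm : ‖‖c ↑t‖⁻¹ • c ↑t‖ = 1 := by
        rw [norm_smul, norm_inv, norm_norm, inv_mul_cancel₀ (ne_of_gt hpos)]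
      refine ⟨h1, hnorm, ?_⟩
      show f p₁ (‖c ↑t‖⁻¹ • c ↑t) < -δ
      rw [f_eq_inner, real_inner_smul_right]
      have hX := hinner ↑t ht0 ht1
      have hle := hcle ↑t ht0 ht1
      have hinv : 1 ≤ ‖c ↑t‖⁻¹ := by
        have hmc := mul_inv_cancel₀ (ne_of_gt hpos)
        nlinarith [inv_pos.mpr hpos]
      nlinarith [mul_nonneg (by linarith : (0:ℝ) ≤ ‖c ↑t‖⁻¹ - 1)
        (by linarith : (0:ℝ) ≤ -⟪g p₁, c ↑t⟫)]
  refine ⟨(e1, e1), hmem, ?_⟩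
  rintro ⟨p₁, p₂⟩ ⟨h1, h2, hf⟩
  exact (((fiber p₁ p₂ h1 h2 hf).trans (base p₁ h1))).symm
end
end

section
/- Let O be a nonzero octopole. Then there exist at most three pairwise non-parallel unit vectors v ∈ ℝ³ with O(v,v,·) = 0; equivalently, for any four unit vectors v₁, v₂, v₃, v₄ ∈ ℝ³ satisfying O(vᵢ,vᵢ,w) = 0 for all w ∈ ℝ³ and each i, there exist indices i ≠ j with vᵢ = vⱼ or vᵢ = −vⱼ. -/
noncomputable section

/-- The standard basis vectors of `ℝ³`. -/
def stdBasis (i : Fin 3) : E3 := EuclideanSpace.single i 1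

section aux

variable {O : E3 → E3 → E3 → ℝ}

lemma Ozero (hlin : ∀ (c : ℝ) (u u' v w : E3), O (c • u + u') v w = c * O u v w + O u' v w)
    (v w : E3) : O 0 v w = 0 := by
  have h := hlin (-1) 0 0 v w
  simp only [smul_zero, add_zero] at h
  linarith

lemma Oadd (hlin : ∀ (c : ℝ) (u u' v w : E3), O (c • u + u') v w = c * O u v w + O u' v w)
    (u u' v w : E3) : O (u + u') v w = O u v w + O u' v w := by
  have h := hlin 1 u u' v w
  simpa using h

lemma Osmul (hlin : ∀ (c : ℝ) (u u' v w : E3), O (c • u + u') v w = c * O u v w + O u' v w)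
    (c : ℝ) (u v w : E3) : O (c • u) v w = c * O u v w := by
  have h := hlin c u 0 v w
  rw [add_zero, Ozero hlin] at h
  linarith

lemma expand1 (hlin : ∀ (c : ℝ) (u u' v w : E3), O (c • u + u') v w = c * O u v w + O u' v w)
    (b : Module.Basis (Fin 3) ℝ E3) (u v w : E3) :
    O u v w = ∑ i, b.repr u i * O (b i) v w := by
  have hF : IsLinearMap ℝ (fun u => O u v w) :=
    ⟨fun a c => Oadd hlin a c v w, fun c x => Osmul hlin c x v w⟩
  let F := IsLinearMap.mk' _ hF
  have h1 : O u v w = F (∑ i, b.repr u i • b i) := by rw [b.sum_repr]; rfl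
  rw [h1, map_sum]
  simp [F, smul_eq_mul]

lemma expand2 (hlin : ∀ (c : ℝ) (u u' v w : E3), O (c • u + u') v w = c * O u v w + O u' v w)
    (hsym12 : ∀ u v w, O u v w = O v u w)
    (b : Module.Basis (Fin 3) ℝ E3) (u v w : E3) :
    O u v w = ∑ i, b.repr v i * O u (b i) w := by
  rw [hsym12, expand1 hlin b]
  exact Finset.sum_congr rfl fun i _ => by rw [hsym12]

lemma expand3 (hlin : ∀ (c : ℝ) (u u' v w : E3), O (c • u + u') v w = c * O u v w + O u' v w)
    (hsym12 : ∀ u v w, O u v w = O v u w)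
    (hsym23 : ∀ u v w, O u v w = O u w v)
    (b : Module.Basis (Fin 3) ℝ E3) (u v w : E3) :
    O u v w = ∑ i, b.repr w i * O u v (b i) := by
  rw [hsym23, expand2 hlin hsym12 b]
  exact Finset.sum_congr rfl fun i _ => by rw [hsym23]

lemma zero_of_basis (hlin : ∀ (c : ℝ) (u u' v w : E3), O (c • u + u') v w = c * O u v w + O u' v w)
    (hsym12 : ∀ u v w, O u v w = O v u w)
    (hsym23 : ∀ u v w, O u v w = O u w v)
    (b : Module.Basis (Fin 3) ℝ E3) (h : ∀ i j k, O (b i) (b j) (b k) = 0) : O = 0 := by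
  funext u v w
  show O u v w = 0
  rw [expand1 hlin b]
  refine Finset.sum_eq_zero fun i _ => mul_eq_zero_of_right _ ?_
  rw [expand2 hlin hsym12 b]
  refine Finset.sum_eq_zero fun j _ => mul_eq_zero_of_right _ ?_
  rw [expand3 hlin hsym12 hsym23 b]
  refine Finset.sum_eq_zero fun k _ => mul_eq_zero_of_right _ ?_
  exact h i j k

end aux
section aux2

variable {O : E3 → E3 → E3 → ℝ}

/-- If a symmetric trilinear traceless form kills two independent vectors in both of
its last two slots (with first slot `z` fixed), then `O z · ·` has rank ≤ 1 and is traceless,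
hence zero. -/
lemma slot_zero (hlin : ∀ (c : ℝ) (u u' v w : E3), O (c • u + u') v w = c * O u v w + O u' v w)
    (hsym12 : ∀ u v w, O u v w = O v u w)
    (hsym23 : ∀ u v w, O u v w = O u w v)
    (htraceless : ∀ w : E3, ∑ i, O (stdBasis i) (stdBasis i) w = 0)
    (b : Module.Basis (Fin 3) ℝ E3) (z : E3)
    (hz0 : ∀ y, O z (b 0) y = 0) (hz1 : ∀ y, O z (b 1) y = 0) :
    ∀ x y, O z x y = 0 := by
  have hzc : ∀ (j : Fin 3) (y : E3), j ≠ 2 → O z (b j) y = 0 := by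
    intro j y hj
    fin_cases j
    · exact hz0 y
    · exact hz1 y
    · exact absurd rfl hj
  have hexp : ∀ x y, O z x y = b.repr x 2 * (b.repr y 2 * O z (b 2) (b 2)) := by
    intro x y
    rw [expand2 hlin hsym12 b z x y, Fin.sum_univ_three, hz0, hz1, mul_zero, mul_zero,
      zero_add, zero_add]
    congr 1
    rw [expand3 hlin hsym12 hsym23 b z (b 2) y, Fin.sum_univ_three]
    have h0 : O z (b 2) (b 0) = 0 := by rw [hsym23]; exact hz0 _
    have h1 : O z (b 2) (b 1) = 0 := by rw [hsym23]; exact hz1 _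
    rw [h0, h1, mul_zero, mul_zero, zero_add, zero_add]
  have htr : ∑ i, O z (stdBasis i) (stdBasis i) = 0 := by
    rw [Finset.sum_congr rfl fun i _ => by rw [hsym12 z, hsym23, hsym12]]
    exact htraceless z
  have hbeta : O z (b 2) (b 2) = 0 := by
    by_contra hβ
    have hsum : (∑ i, b.repr (stdBasis i) 2 ^ 2) * O z (b 2) (b 2) = 0 := by
      rw [Finset.sum_mul, ← htr]
      exact Finset.sum_congr rfl fun i _ => by
        simp only [hexp (stdBasis i) (stdBasis i)]; ring
    have hc : ∑ i, b.repr (stdBasis i) 2 ^ 2 = 0 := by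
      rcases mul_eq_zero.1 hsum with h | h
      · exact h
      · exact absurd h hβ
    have hci : ∀ i : Fin 3, b.repr (stdBasis i) 2 = 0 := by
      intro i
      have := (Finset.sum_eq_zero_iff_of_nonneg fun i _ => sq_nonneg (b.repr (stdBasis i) 2)).1
        hc i (Finset.mem_univ i)
      exact (pow_eq_zero_iff two_ne_zero).1 this
    have hco : b.coord 2 = 0 := by
      apply (EuclideanSpace.basisFun (Fin 3) ℝ).toBasis.ext
      intro i
      have : ((EuclideanSpace.basisFun (Fin 3) ℝ).toBasis : Fin 3 → E3) i = stdBasis i := by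
        rw [OrthonormalBasis.coe_toBasis]
        simp [stdBasis, EuclideanSpace.basisFun_apply]
      rw [this]
      simpa [Module.Basis.coord_apply] using hci i
    have h1 : b.coord 2 (b 2) = 1 := by simp [Module.Basis.coord_apply]
    rw [hco] at h1
    simp at h1
  intro x y
  rw [hexp, hbeta, mul_zero, mul_zero]

lemma coplanar_case (hlin : ∀ (c : ℝ) (u u' v w : E3), O (c • u + u') v w = c * O u v w + O u' v w)
    (hsym12 : ∀ u v w, O u v w = O v u w)
    (hsym23 : ∀ u v w, O u v w = O u w v)
    (htraceless : ∀ w : E3, ∑ i, O (stdBasis i) (stdBasis i) w = 0)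
    (u₀ u₁ : E3) (hind : LinearIndependent ℝ ![u₀, u₁])
    (h00 : ∀ w, O u₀ u₀ w = 0) (h11 : ∀ w, O u₁ u₁ w = 0) (h01 : ∀ w, O u₀ u₁ w = 0) :
    O = 0 := by
  obtain ⟨e, he⟩ : ∃ e, e ∉ Submodule.span ℝ (Set.range ![u₀, u₁]) := by
    by_contra h
    push_neg at h
    have htop : Submodule.span ℝ (Set.range ![u₀, u₁]) = ⊤ := Submodule.eq_top_iff'.2 h
    have := finrank_le_of_span_eq_top htop
    simp [finrank_euclideanSpace] at this
  have hsnoc : (![u₀, u₁, e] : Fin 3 → E3) = Fin.snoc ![u₀, u₁] e := by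
    funext i
    fin_cases i <;> rfl
  have hind3 : LinearIndependent ℝ ![u₀, u₁, e] := by
    rw [hsnoc, linearIndependent_fin_snoc]
    exact ⟨hind, he⟩
  let b : Module.Basis (Fin 3) ℝ E3 := basisOfLinearIndependentOfCardEqFinrank hind3
    (by simp [finrank_euclideanSpace])
  have hb : ∀ i, b i = ![u₀, u₁, e] i := fun i =>
    congrFun (coe_basisOfLinearIndependentOfCardEqFinrank hind3 _) i
  have hb0 : b 0 = u₀ := by rw [hb]; rfl
  have hb1 : b 1 = u₁ := by rw [hb]; rfl
  have hb2 : b 2 = e := by rw [hb]; rfl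
  -- O u₀ · · = 0
  have hf0 : ∀ x y, O u₀ x y = 0 := by
    apply slot_zero hlin hsym12 hsym23 htraceless b
    · intro y; rw [hb0]; exact h00 y
    · intro y; rw [hb1]; exact h01 y
  have hf1 : ∀ x y, O u₁ x y = 0 := by
    apply slot_zero hlin hsym12 hsym23 htraceless b
    · intro y; rw [hb0, hsym12]; exact h01 y
    · intro y; rw [hb1]; exact h11 y
  have hfe : ∀ x y, O e x y = 0 := by
    apply slot_zero hlin hsym12 hsym23 htraceless b
    · intro y; rw [hb0, hsym12]; exact hf0 e y
    · intro y; rw [hb1, hsym12]; exact hf1 e y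
  apply zero_of_basis hlin hsym12 hsym23 b
  intro i j k
  fin_cases i
  · rw [show b ⟨0, by norm_num⟩ = u₀ from hb0]; exact hf0 _ _
  · rw [show b ⟨1, by norm_num⟩ = u₁ from hb1]; exact hf1 _ _
  · rw [show b ⟨2, by norm_num⟩ = e from hb2]; exact hfe _ _

lemma Opair (hlin : ∀ (c : ℝ) (u u' v w : E3), O (c • u + u') v w = c * O u v w + O u' v w)
    (hsym12 : ∀ u v w, O u v w = O v u w)
    (p q : ℝ) (x y w : E3) :
    O (p • x + q • y) (p • x + q • y) w =
      p * p * O x x w + 2 * (p * q) * O x y w + q * q * O y y w := by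
  have hadd2 : ∀ u a c w, O u (a + c) w = O u a w + O u c w := by
    intro u a c w
    rw [hsym12, Oadd hlin, hsym12, hsym12 c]
  have hsmul2 : ∀ (r : ℝ) u a w, O u (r • a) w = r * O u a w := by
    intro r u a w
    rw [hsym12, Osmul hlin, hsym12]
  rw [Oadd hlin, Osmul hlin, Osmul hlin, hadd2, hadd2, hsmul2, hsmul2, hsmul2, hsmul2,
    hsym12 y x]
  ring

end aux2

/-- A nonzero traceless symmetric trilinear form (octopole) on `ℝ³` vanishes, as a form
`O(v,v,·)`, for at most three pairwise non-parallel unit vectors `v`: given four unit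
vectors `v₁,…,v₄` with `O(vᵢ,vᵢ,·) = 0`, two of them must be equal or opposite. -/
theorem stmt7 (O : E3 → E3 → E3 → ℝ)
    (hlin : ∀ (c : ℝ) (u u' v w : E3), O (c • u + u') v w = c * O u v w + O u' v w)
    (hsym12 : ∀ u v w, O u v w = O v u w)
    (hsym23 : ∀ u v w, O u v w = O u w v)
    (htraceless : ∀ w : E3, ∑ i, O (stdBasis i) (stdBasis i) w = 0)
    (hO : O ≠ 0)
    (v : Fin 4 → E3) (hunit : ∀ i, ‖v i‖ = 1)
    (hker : ∀ i, ∀ w : E3, O (v i) (v i) w = 0) :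
    ∃ i j, i ≠ j ∧ (v i = v j ∨ v i = -v j) := by
  by_contra hcon
  push_neg at hcon
  -- non-parallelism
  have hnpar : ∀ i j, i ≠ j → ∀ c : ℝ, v i ≠ c • v j := by
    intro i j hij c hc
    have h1 : |c| = 1 := by
      have h := hunit i
      rw [hc, norm_smul, hunit j, Real.norm_eq_abs, mul_one] at h
      exact h
    rcases (abs_eq (by norm_num : (0:ℝ) ≤ 1)).1 h1 with rfl | rfl
    · rw [one_smul] at hc; exact (hcon i j hij).1 hc
    · rw [neg_smul, one_smul] at hc; exact (hcon i j hij).2 hc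
  have hne0 : ∀ i, v i ≠ 0 := fun i h => by simpa [h] using hunit i
  have hpairli : ∀ i j, i ≠ j → LinearIndependent ℝ ![v i, v j] := by
    intro i j hij
    rw [linearIndependent_fin2]
    refine ⟨by simpa using hne0 j, fun a ha => ?_⟩
    exact hnpar i j hij a (by simpa using ha.symm)
  by_cases hind : LinearIndependent ℝ ![v 0, v 1, v 2]
  · -- generic case: v 0, v 1, v 2 form a basis
    let b : Module.Basis (Fin 3) ℝ E3 := basisOfLinearIndependentOfCardEqFinrank hind
      (by simp [finrank_euclideanSpace])
    have hb : ∀ i, b i = ![v 0, v 1, v 2] i := fun i =>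
      congrFun (coe_basisOfLinearIndependentOfCardEqFinrank hind _) i
    have hb0 : b 0 = v 0 := by rw [hb]; rfl
    have hb1 : b 1 = v 1 := by rw [hb]; rfl
    have hb2 : b 2 = v 2 := by rw [hb]; rfl
    set a : Fin 3 → ℝ := fun i => b.repr (v 3) i with ha
    have hsum3 : v 3 = a 0 • v 0 + a 1 • v 1 + a 2 • v 2 := by
      have h := b.sum_repr (v 3)
      rw [Fin.sum_univ_three, hb0, hb1, hb2] at h
      exact h.symm
    -- expansion of O (v 3) (v 3) w
    have hexp12 : ∀ w, O (v 3) (v 3) w =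
        ∑ i, ∑ j, a i * (a j * O (b i) (b j) w) := by
      intro w
      rw [expand1 hlin b]
      refine Finset.sum_congr rfl fun i _ => ?_
      rw [expand2 hlin hsym12 b, Finset.mul_sum]
    -- values of O (b i) (b j) (v k)
    have q01 : ∀ w, O (v 0) (v 1) w = O (v 0) (v 1) w := fun _ => rfl
    set t := O (v 0) (v 1) (v 2) with hht
    -- three scalar equations
    have veq : ∀ k : Fin 4, a 0 * (a 1 * O (b 0) (b 1) (v k))
        + a 0 * (a 2 * O (b 0) (b 2) (v k))
        + a 1 * (a 0 * O (b 1) (b 0) (v k))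
        + a 1 * (a 2 * O (b 1) (b 2) (v k))
        + a 2 * (a 0 * O (b 2) (b 0) (v k))
        + a 2 * (a 1 * O (b 2) (b 1) (v k)) = 0 := by
      intro k
      have h := hker 3 (v k)
      rw [hexp12 (v k)] at h
      rw [Fin.sum_univ_three, Fin.sum_univ_three, Fin.sum_univ_three, Fin.sum_univ_three] at h
      have d0 : O (b 0) (b 0) (v k) = 0 := by rw [hb0]; exact hker 0 _
      have d1 : O (b 1) (b 1) (v k) = 0 := by rw [hb1]; exact hker 1 _
      have d2 : O (b 2) (b 2) (v k) = 0 := by rw [hb2]; exact hker 2 _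
      rw [d0, d1, d2] at h
      linarith [h]
    have hE2 : a 0 * a 1 * t = 0 := by
      have h := veq 2
      have r01 : O (b 0) (b 1) (v 2) = t := by rw [hb0, hb1]
      have r10 : O (b 1) (b 0) (v 2) = t := by rw [hb0, hb1, hsym12]
      have r02 : O (b 0) (b 2) (v 2) = 0 := by
        rw [hb0, hb2, hsym12, hsym23]; exact hker 2 _
      have r20 : O (b 2) (b 0) (v 2) = 0 := by
        rw [hb0, hb2, hsym23]; exact hker 2 _
      have r12 : O (b 1) (b 2) (v 2) = 0 := by
        rw [hb1, hb2, hsym12, hsym23]; exact hker 2 _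
      have r21 : O (b 2) (b 1) (v 2) = 0 := by
        rw [hb1, hb2, hsym23]; exact hker 2 _
      rw [r01, r10, r02, r20, r12, r21] at h
      linear_combination h / 2
    have hE1 : a 0 * a 2 * t = 0 := by
      have h := veq 1
      have r02 : O (b 0) (b 2) (v 1) = t := by rw [hb0, hb2, hsym23]
      have r20 : O (b 2) (b 0) (v 1) = t := by rw [hb0, hb2, hsym12, hsym23]
      have r01 : O (b 0) (b 1) (v 1) = 0 := by
        rw [hb0, hb1, hsym12, hsym23]; exact hker 1 _
      have r10 : O (b 1) (b 0) (v 1) = 0 := by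
        rw [hb0, hb1, hsym23]; exact hker 1 _
      have r12 : O (b 1) (b 2) (v 1) = 0 := by
        rw [hb1, hb2, hsym23]; exact hker 1 _
      have r21 : O (b 2) (b 1) (v 1) = 0 := by
        rw [hb1, hb2, hsym12, hsym23]; exact hker 1 _
      rw [r01, r10, r02, r20, r12, r21] at h
      linear_combination h / 2
    have hE0 : a 1 * a 2 * t = 0 := by
      have h := veq 0
      have r12 : O (b 1) (b 2) (v 0) = t := by
        rw [hb1, hb2, hsym23, hsym12]
      have r21 : O (b 2) (b 1) (v 0) = t := by
        rw [hb1, hb2, hsym12, hsym23, hsym12]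
      have r01 : O (b 0) (b 1) (v 0) = 0 := by
        rw [hb0, hb1, hsym23]; exact hker 0 _
      have r10 : O (b 1) (b 0) (v 0) = 0 := by
        rw [hb0, hb1, hsym12, hsym23]; exact hker 0 _
      have r02 : O (b 0) (b 2) (v 0) = 0 := by
        rw [hb0, hb2, hsym23]; exact hker 0 _
      have r20 : O (b 2) (b 0) (v 0) = 0 := by
        rw [hb0, hb2, hsym12, hsym23]; exact hker 0 _
      rw [r01, r10, r02, r20, r12, r21] at h
      linear_combination h / 2
    -- at least two coefficients are nonzero
    have h12 : ¬(a 1 = 0 ∧ a 2 = 0) := by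
      rintro ⟨p1, p2⟩
      exact hnpar 3 0 (by decide) (a 0) (by rw [hsum3, p1, p2]; simp)
    have h02 : ¬(a 0 = 0 ∧ a 2 = 0) := by
      rintro ⟨p0, p2⟩
      exact hnpar 3 1 (by decide) (a 1) (by rw [hsum3, p0, p2]; simp)
    have h01 : ¬(a 0 = 0 ∧ a 1 = 0) := by
      rintro ⟨p0, p1⟩
      exact hnpar 3 2 (by decide) (a 2) (by rw [hsum3, p0, p1]; simp)
    have ht : t = 0 := by
      by_contra hT
      have e2 := (mul_eq_zero.1 hE2).resolve_right hT
      have e1 := (mul_eq_zero.1 hE1).resolve_right hT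
      have e0 := (mul_eq_zero.1 hE0).resolve_right hT
      rcases mul_eq_zero.1 e2 with p0 | p1
      · rcases mul_eq_zero.1 e0 with p1 | p2
        · exact h01 ⟨p0, p1⟩
        · exact h02 ⟨p0, p2⟩
      · rcases mul_eq_zero.1 e1 with p0 | p2
        · exact h01 ⟨p0, p1⟩
        · exact h12 ⟨p1, p2⟩
    -- all basis triples vanish
    apply hO
    apply zero_of_basis hlin hsym12 hsym23 b
    intro i j k
    have ht' : O (v 0) (v 1) (v 2) = 0 := ht
    rw [hb i, hb j, hb k]
    fin_cases i <;> fin_cases j <;> fin_cases k <;>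
      first
        | exact hker 0 _
        | exact hker 1 _
        | exact hker 2 _
        | (rw [hsym23]; first | exact hker 0 _ | exact hker 1 _ | exact hker 2 _)
        | (rw [hsym12, hsym23]; first | exact hker 0 _ | exact hker 1 _ | exact hker 2 _)
        | exact ht'
        | (rw [hsym12]; exact ht')
        | (rw [hsym23]; exact ht')
        | (rw [hsym23, hsym12]; exact ht')
        | (rw [hsym12, hsym23]; exact ht')
        | (rw [hsym12, hsym23, hsym12]; exact ht')
  · -- degenerate case: v 2 ∈ span {v 0, v 1}
    have hmem : v 2 ∈ Submodule.span ℝ ({v 0, v 1} : Set E3) := by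
      by_contra hm
      apply hind
      have hsnoc : (![v 0, v 1, v 2] : Fin 3 → E3) = Fin.snoc ![v 0, v 1] (v 2) := by
        funext i; fin_cases i <;> rfl
      rw [hsnoc, linearIndependent_fin_snoc]
      refine ⟨hpairli 0 1 (by decide), ?_⟩
      have hrange : Set.range ![v 0, v 1] = {v 0, v 1} := by
        ext x
        simp [Matrix.range_cons, Matrix.range_empty, or_comm]
      rw [hrange]
      exact hm
    obtain ⟨p, q, hpq⟩ := Submodule.mem_span_pair.1 hmem
    have hp : p ≠ 0 := by
      rintro rfl
      exact hnpar 2 1 (by decide) q (by rw [← hpq]; simp)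
    have hq : q ≠ 0 := by
      rintro rfl
      exact hnpar 2 0 (by decide) p (by rw [← hpq]; simp)
    have h01w : ∀ w, O (v 0) (v 1) w = 0 := by
      intro w
      have h := hker 2 w
      rw [← hpq, Opair hlin hsym12] at h
      rw [hker 0, hker 1] at h
      have h2 : (2 : ℝ) * (p * q) ≠ 0 := by
        have := mul_ne_zero hp hq
        positivity
      simp only [mul_zero, zero_add, add_zero] at h
      exact (mul_eq_zero.1 h).resolve_left h2
    exact hO (coplanar_case hlin hsym12 hsym23 htraceless (v 0) (v 1)
      (hpairli 0 1 (by decide)) (hker 0) (hker 1) h01w)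
end
end

section
/- Let A, B be real symmetric 3×3 matrices with tr(B) = 0 and B ≠ 0. If tr(A·Uᵀ·B·U) = 0 for every U ∈ SO(3), then there exists λ ∈ ℝ such that A = λ·I, where I is the 3×3 identity matrix. -/
open Matrix

set_option maxHeartbeats 1000000

lemma tr3aux (a b c d e f g h i : ℝ) :
    (!![a,b,c;d,e,f;g,h,i] : M3)ᵀ = !![a,d,g;b,e,h;c,f,i] := by
  ext x y; fin_cases x <;> fin_cases y <;> rfl

noncomputable def ccaux : ℝ := Real.sqrt 2 / 2

lemma cc2aux : ccaux^2 = 1/2 := by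
  rw [ccaux, div_pow, Real.sq_sqrt] <;> norm_num

lemma keyaux (A : M3) (hA : Aᵀ = A) (b0 b1 b2 : ℝ) (hsum : b0 + b1 + b2 = 0)
    (hne : ¬(b0 = b1 ∧ b1 = b2))
    (h : ∀ U ∈ SO3, (A * (Uᵀ * !![b0,0,0;0,b1,0;0,0,b2] * U)).trace = 0) :
    ∃ lam : ℝ, A = lam • (1 : M3) := by
  have h01 : A 1 0 = A 0 1 := congrFun (congrFun hA 0) 1
  have h02 : A 2 0 = A 0 2 := congrFun (congrFun hA 0) 2
  have h12 : A 2 1 = A 1 2 := congrFun (congrFun hA 1) 2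
  have e1 : A 0 0 * b0 + A 1 1 * b1 + A 2 2 * b2 = 0 := by
    have h' := h !![1,0,0;0,1,0;0,0,1] (by
      constructor
      · rw [tr3aux, Matrix.mul_fin_three, Matrix.one_fin_three]; norm_num
      · norm_num [Matrix.det_fin_three]; simp)
    rw [tr3aux, Matrix.mul_fin_three, Matrix.mul_fin_three] at h'
    simp only [Matrix.trace_fin_three, Matrix.mul_apply, Fin.sum_univ_three] at h'
    simp only [Matrix.cons_val', Matrix.cons_val_zero, Matrix.cons_val_one, Matrix.head_cons,
      Matrix.empty_val', Matrix.cons_val_fin_one, Matrix.head_fin_const, Matrix.cons_val_two,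
      Matrix.tail_cons, Matrix.vecHead, Matrix.vecTail, Function.comp_apply,
      Fin.succ_zero_eq_one, Fin.succ_one_eq_two, Matrix.of_apply] at h'
    ring_nf at h'
    linear_combination h'
  have e2 : A 0 0 * b2 + A 1 1 * b0 + A 2 2 * b1 = 0 := by
    have h' := h !![0,1,0;0,0,1;1,0,0] (by
      constructor
      · rw [tr3aux, Matrix.mul_fin_three, Matrix.one_fin_three]; norm_num
      · norm_num [Matrix.det_fin_three]; simp)
    rw [tr3aux, Matrix.mul_fin_three, Matrix.mul_fin_three] at h'
    simp only [Matrix.trace_fin_three, Matrix.mul_apply, Fin.sum_univ_three] at h'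
    simp only [Matrix.cons_val', Matrix.cons_val_zero, Matrix.cons_val_one, Matrix.head_cons,
      Matrix.empty_val', Matrix.cons_val_fin_one, Matrix.head_fin_const, Matrix.cons_val_two,
      Matrix.tail_cons, Matrix.vecHead, Matrix.vecTail, Function.comp_apply,
      Fin.succ_zero_eq_one, Fin.succ_one_eq_two, Matrix.of_apply] at h'
    ring_nf at h'
    linear_combination h'
  have e3 : A 0 0 * b1 + A 1 1 * b2 + A 2 2 * b0 = 0 := by
    have h' := h !![0,0,1;1,0,0;0,1,0] (by
      constructor
      · rw [tr3aux, Matrix.mul_fin_three, Matrix.one_fin_three]; norm_num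
      · norm_num [Matrix.det_fin_three]; simp)
    rw [tr3aux, Matrix.mul_fin_three, Matrix.mul_fin_three] at h'
    simp only [Matrix.trace_fin_three, Matrix.mul_apply, Fin.sum_univ_three] at h'
    simp only [Matrix.cons_val', Matrix.cons_val_zero, Matrix.cons_val_one, Matrix.head_cons,
      Matrix.empty_val', Matrix.cons_val_fin_one, Matrix.head_fin_const, Matrix.cons_val_two,
      Matrix.tail_cons, Matrix.vecHead, Matrix.vecTail, Function.comp_apply,
      Fin.succ_zero_eq_one, Fin.succ_one_eq_two, Matrix.of_apply] at h'
    ring_nf at h'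
    linear_combination h'
  have hq : (b0-b1)^2 + (b0-b1)*(b1-b2) + (b1-b2)^2 ≠ 0 := by
    intro h0
    exact hne ⟨by nlinarith [sq_nonneg (b0-b1), sq_nonneg (b1-b2), sq_nonneg (b0-b2)],
      by nlinarith [sq_nonneg (b0-b1), sq_nonneg (b1-b2), sq_nonneg (b0-b2)]⟩
  have hx : A 0 0 = A 2 2 := by
    have hu : (A 0 0 - A 2 2) * ((b0-b1)^2 + (b0-b1)*(b1-b2) + (b1-b2)^2) = 0 := by
      linear_combination (b0-b2)*e1 - (b1-b2)*e2 + (b1-b0)*e3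
    rcases mul_eq_zero.mp hu with h'|h'
    · linarith
    · exact absurd h' hq
  have hy : A 1 1 = A 2 2 := by
    have hv : (A 1 1 - A 2 2) * ((b0-b1)^2 + (b0-b1)*(b1-b2) + (b1-b2)^2) = 0 := by
      linear_combination (b1-b2)*e1 + (b0-b1)*e2 - (b0-b2)*e3
    rcases mul_eq_zero.mp hv with h'|h'
    · linarith
    · exact absurd h' hq
  have f1 : (A 0 0 + A 1 1)*(b0+b1)/2 + A 2 2 * b2 + (A 0 1 + A 1 0)*(b1-b0)/2 = 0 := by
    have h' := h !![ccaux,-ccaux,0; ccaux,ccaux,0; 0,0,1] (by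
      constructor
      · rw [tr3aux, Matrix.mul_fin_three, Matrix.one_fin_three]
        try simp [Matrix.vecHead, Matrix.vecTail]
        try ring_nf
        try simp [cc2aux]
        try norm_num
      · try simp [Matrix.det_fin_three, Matrix.vecHead, Matrix.vecTail]
        try ring_nf
        try simp [cc2aux]
        try norm_num)
    rw [tr3aux, Matrix.mul_fin_three, Matrix.mul_fin_three] at h'
    simp only [Matrix.trace_fin_three, Matrix.mul_apply, Fin.sum_univ_three] at h'
    simp only [Matrix.cons_val', Matrix.cons_val_zero, Matrix.cons_val_one, Matrix.head_cons,
      Matrix.empty_val', Matrix.cons_val_fin_one, Matrix.head_fin_const, Matrix.cons_val_two,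
      Matrix.tail_cons, Matrix.vecHead, Matrix.vecTail, Function.comp_apply,
      Fin.succ_zero_eq_one, Fin.succ_one_eq_two, Matrix.of_apply] at h'
    ring_nf at h'
    rw [cc2aux] at h'
    ring_nf at h'
    linear_combination h'
  have f3 : (A 0 0 + A 1 1)*(b1+b2)/2 + A 2 2 * b0 + (A 0 1 + A 1 0)*(b2-b1)/2 = 0 := by
    have h' := h !![0,0,1; ccaux,-ccaux,0; ccaux,ccaux,0] (by
      constructor
      · rw [tr3aux, Matrix.mul_fin_three, Matrix.one_fin_three]
        try simp [Matrix.vecHead, Matrix.vecTail]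
        try ring_nf
        try simp [cc2aux]
        try norm_num
      · try simp [Matrix.det_fin_three, Matrix.vecHead, Matrix.vecTail]
        try ring_nf
        try simp [cc2aux]
        try norm_num)
    rw [tr3aux, Matrix.mul_fin_three, Matrix.mul_fin_three] at h'
    simp only [Matrix.trace_fin_three, Matrix.mul_apply, Fin.sum_univ_three] at h'
    simp only [Matrix.cons_val', Matrix.cons_val_zero, Matrix.cons_val_one, Matrix.head_cons,
      Matrix.empty_val', Matrix.cons_val_fin_one, Matrix.head_fin_const, Matrix.cons_val_two,
      Matrix.tail_cons, Matrix.vecHead, Matrix.vecTail, Function.comp_apply,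
      Fin.succ_zero_eq_one, Fin.succ_one_eq_two, Matrix.of_apply] at h'
    ring_nf at h'
    rw [cc2aux] at h'
    ring_nf at h'
    linear_combination h'
  have g2 : (A 0 0 + A 2 2)*(b2+b1)/2 + A 1 1 * b0 + (A 0 2 + A 2 0)*(b1-b2)/2 = 0 := by
    have h' := h !![0,1,0; ccaux,0,ccaux; ccaux,0,-ccaux] (by
      constructor
      · rw [tr3aux, Matrix.mul_fin_three, Matrix.one_fin_three]
        try simp [Matrix.vecHead, Matrix.vecTail]
        try ring_nf
        try simp [cc2aux]
        try norm_num
      · try simp [Matrix.det_fin_three, Matrix.vecHead, Matrix.vecTail]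
        try ring_nf
        try simp [cc2aux]
        try norm_num)
    rw [tr3aux, Matrix.mul_fin_three, Matrix.mul_fin_three] at h'
    simp only [Matrix.trace_fin_three, Matrix.mul_apply, Fin.sum_univ_three] at h'
    simp only [Matrix.cons_val', Matrix.cons_val_zero, Matrix.cons_val_one, Matrix.head_cons,
      Matrix.empty_val', Matrix.cons_val_fin_one, Matrix.head_fin_const, Matrix.cons_val_two,
      Matrix.tail_cons, Matrix.vecHead, Matrix.vecTail, Function.comp_apply,
      Fin.succ_zero_eq_one, Fin.succ_one_eq_two, Matrix.of_apply] at h'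
    ring_nf at h'
    rw [cc2aux] at h'
    ring_nf at h'
    linear_combination h'
  have g3 : (A 0 0 + A 2 2)*(b1+b0)/2 + A 1 1 * b2 + (A 0 2 + A 2 0)*(b0-b1)/2 = 0 := by
    have h' := h !![ccaux,0,ccaux; ccaux,0,-ccaux; 0,1,0] (by
      constructor
      · rw [tr3aux, Matrix.mul_fin_three, Matrix.one_fin_three]
        try simp [Matrix.vecHead, Matrix.vecTail]
        try ring_nf
        try simp [cc2aux]
        try norm_num
      · try simp [Matrix.det_fin_three, Matrix.vecHead, Matrix.vecTail]
        try ring_nf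
        try simp [cc2aux]
        try norm_num)
    rw [tr3aux, Matrix.mul_fin_three, Matrix.mul_fin_three] at h'
    simp only [Matrix.trace_fin_three, Matrix.mul_apply, Fin.sum_univ_three] at h'
    simp only [Matrix.cons_val', Matrix.cons_val_zero, Matrix.cons_val_one, Matrix.head_cons,
      Matrix.empty_val', Matrix.cons_val_fin_one, Matrix.head_fin_const, Matrix.cons_val_two,
      Matrix.tail_cons, Matrix.vecHead, Matrix.vecTail, Function.comp_apply,
      Fin.succ_zero_eq_one, Fin.succ_one_eq_two, Matrix.of_apply] at h'
    ring_nf at h'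
    rw [cc2aux] at h'
    ring_nf at h'
    linear_combination h'
  have k1 : A 0 0 * b0 + (A 1 1 + A 2 2)*(b1+b2)/2 + (A 1 2 + A 2 1)*(b2-b1)/2 = 0 := by
    have h' := h !![1,0,0; 0,ccaux,-ccaux; 0,ccaux,ccaux] (by
      constructor
      · rw [tr3aux, Matrix.mul_fin_three, Matrix.one_fin_three]
        try simp [Matrix.vecHead, Matrix.vecTail]
        try ring_nf
        try simp [cc2aux]
        try norm_num
      · try simp [Matrix.det_fin_three, Matrix.vecHead, Matrix.vecTail]
        try ring_nf
        try simp [cc2aux]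
        try norm_num)
    rw [tr3aux, Matrix.mul_fin_three, Matrix.mul_fin_three] at h'
    simp only [Matrix.trace_fin_three, Matrix.mul_apply, Fin.sum_univ_three] at h'
    simp only [Matrix.cons_val', Matrix.cons_val_zero, Matrix.cons_val_one, Matrix.head_cons,
      Matrix.empty_val', Matrix.cons_val_fin_one, Matrix.head_fin_const, Matrix.cons_val_two,
      Matrix.tail_cons, Matrix.vecHead, Matrix.vecTail, Function.comp_apply,
      Fin.succ_zero_eq_one, Fin.succ_one_eq_two, Matrix.of_apply] at h'
    ring_nf at h'
    rw [cc2aux] at h'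
    ring_nf at h'
    linear_combination h'
  have k2 : A 0 0 * b2 + (A 1 1 + A 2 2)*(b0+b1)/2 + (A 1 2 + A 2 1)*(b1-b0)/2 = 0 := by
    have h' := h !![0,ccaux,-ccaux; 0,ccaux,ccaux; 1,0,0] (by
      constructor
      · rw [tr3aux, Matrix.mul_fin_three, Matrix.one_fin_three]
        try simp [Matrix.vecHead, Matrix.vecTail]
        try ring_nf
        try simp [cc2aux]
        try norm_num
      · try simp [Matrix.det_fin_three, Matrix.vecHead, Matrix.vecTail]
        try ring_nf
        try simp [cc2aux]
        try norm_num)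
    rw [tr3aux, Matrix.mul_fin_three, Matrix.mul_fin_three] at h'
    simp only [Matrix.trace_fin_three, Matrix.mul_apply, Fin.sum_univ_three] at h'
    simp only [Matrix.cons_val', Matrix.cons_val_zero, Matrix.cons_val_one, Matrix.head_cons,
      Matrix.empty_val', Matrix.cons_val_fin_one, Matrix.head_fin_const, Matrix.cons_val_two,
      Matrix.tail_cons, Matrix.vecHead, Matrix.vecTail, Function.comp_apply,
      Fin.succ_zero_eq_one, Fin.succ_one_eq_two, Matrix.of_apply] at h'
    ring_nf at h'
    rw [cc2aux] at h'
    ring_nf at h'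
    linear_combination h'
  have hp : A 0 1 = 0 := by
    have hp1 : (A 0 1 + A 1 0) * (b1 - b0) = 0 := by
      linear_combination 2*f1 - (b0+b1)*hx - (b0+b1)*hy - 2*(A 2 2)*hsum
    have hp3 : (A 0 1 + A 1 0) * (b2 - b1) = 0 := by
      linear_combination 2*f3 - (b1+b2)*hx - (b1+b2)*hy - 2*(A 2 2)*hsum
    by_cases hb : b0 = b1
    · rcases mul_eq_zero.mp hp3 with h'|h'
      · linarith
      · exact absurd ⟨hb, by linarith⟩ hne
    · rcases mul_eq_zero.mp hp1 with h'|h'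
      · linarith
      · exact absurd (by linarith : b0 = b1) hb
  have hr : A 0 2 = 0 := by
    have hq2 : (A 0 2 + A 2 0) * (b1 - b2) = 0 := by
      linear_combination 2*g2 - (b2+b1)*hx - 2*b0*hy - 2*(A 2 2)*hsum
    have hq3 : (A 0 2 + A 2 0) * (b0 - b1) = 0 := by
      linear_combination 2*g3 - (b1+b0)*hx - 2*b2*hy - 2*(A 2 2)*hsum
    by_cases hb : b0 = b1
    · rcases mul_eq_zero.mp hq2 with h'|h'
      · linarith
      · exact absurd ⟨hb, by linarith⟩ hne
    · rcases mul_eq_zero.mp hq3 with h'|h'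
      · linarith
      · exact absurd (by linarith : b0 = b1) hb
  have hs : A 1 2 = 0 := by
    have hr1 : (A 1 2 + A 2 1) * (b2 - b1) = 0 := by
      linear_combination 2*k1 - 2*b0*hx - (b1+b2)*hy - 2*(A 2 2)*hsum
    have hr2 : (A 1 2 + A 2 1) * (b1 - b0) = 0 := by
      linear_combination 2*k2 - 2*b2*hx - (b0+b1)*hy - 2*(A 2 2)*hsum
    by_cases hb : b0 = b1
    · rcases mul_eq_zero.mp hr1 with h'|h'
      · linarith
      · exact absurd ⟨hb, by linarith⟩ hne
    · rcases mul_eq_zero.mp hr2 with h'|h'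
      · linarith
      · exact absurd (by linarith : b0 = b1) hb
  refine ⟨A 2 2, ?_⟩
  ext i j
  fin_cases i <;> fin_cases j <;>
    simp [Matrix.one_apply] <;> linarith

/-- If `A`, `B` are real symmetric 3×3 matrices with `tr B = 0` and `B ≠ 0`, and
`tr (A Uᵀ B U) = 0` for every `U ∈ SO(3)`, then `A` is a multiple of the identity. -/
theorem stmt10 (A B : M3) (hA : Aᵀ = A) (hB : Bᵀ = B) (htrB : B.trace = 0) (hBne : B ≠ 0)
    (h : ∀ U ∈ SO3, (A * (Uᵀ * B * U)).trace = 0) :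
    ∃ lam : ℝ, A = lam • (1 : M3) := by
  have hBH : B.IsHermitian := by
    rwa [Matrix.IsHermitian, Matrix.conjTranspose_eq_transpose_of_trivial]
  set b : Fin 3 → ℝ := hBH.eigenvalues with hb
  have hdiag : Matrix.diagonal b = !![b 0,0,0;0,b 1,0;0,0,b 2] := by
    ext i j
    fin_cases i <;> fin_cases j <;> simp [Matrix.diagonal_apply, Matrix.vecHead, Matrix.vecTail]
  obtain ⟨V, hV1, hV2, hVB⟩ : ∃ V : M3, Vᵀ * V = 1 ∧ V.det = 1 ∧
      B = V * Matrix.diagonal b * Vᵀ := by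
    set V0 : M3 := (hBH.eigenvectorUnitary : M3) with hV0
    have hmem := hBH.eigenvectorUnitary.2
    have hstar : star V0 * V0 = 1 := (Unitary.mem_iff.mp hmem).1
    have hstar_eq : star V0 = V0ᵀ := Matrix.conjTranspose_eq_transpose_of_trivial V0
    have hV0t : V0ᵀ * V0 = 1 := by rw [← hstar_eq]; exact hstar
    have hspec : B = V0 * Matrix.diagonal b * V0ᵀ := by
      have := hBH.spectral_theorem
      rw [Unitary.conjStarAlgAut_apply] at this
      rwa [hstar_eq, show (RCLike.ofReal ∘ hBH.eigenvalues : Fin 3 → ℝ) = b from rfl] at this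
    have hdet2 : V0.det * V0.det = 1 := by
      have := congrArg Matrix.det hV0t
      rwa [Matrix.det_mul, Matrix.det_transpose, Matrix.det_one] at this
    rcases mul_self_eq_one_iff.mp hdet2 with hd | hd
    · exact ⟨V0, hV0t, hd, hspec⟩
    · set F : M3 := !![(-1:ℝ),0,0;0,1,0;0,0,1] with hF
      have hFt : Fᵀ = F := by rw [hF, tr3aux]
      have hFF : F * F = 1 := by
        rw [hF, Matrix.mul_fin_three, Matrix.one_fin_three]; norm_num
      refine ⟨V0 * F, ?_, ?_, ?_⟩
      · calc (V0 * F)ᵀ * (V0 * F) = Fᵀ * (V0ᵀ * V0) * F := by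
              rw [Matrix.transpose_mul]; noncomm_ring
          _ = 1 := by rw [hV0t, mul_one, hFt, hFF]
      · rw [Matrix.det_mul, hd, hF]
        norm_num [Matrix.det_fin_three]
        simp
      · have hFDF : F * Matrix.diagonal b * F = Matrix.diagonal b := by
          rw [hdiag, hF, Matrix.mul_fin_three, Matrix.mul_fin_three]
          norm_num
        calc B = V0 * Matrix.diagonal b * V0ᵀ := hspec
          _ = V0 * (F * Matrix.diagonal b * F) * V0ᵀ := by rw [hFDF]
          _ = V0 * F * Matrix.diagonal b * (Fᵀ * V0ᵀ) := by rw [hFt]; noncomm_ring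
          _ = V0 * F * Matrix.diagonal b * (V0 * F)ᵀ := by rw [Matrix.transpose_mul]
  have h' : ∀ U ∈ SO3, (A * (Uᵀ * !![b 0,0,0;0,b 1,0;0,0,b 2] * U)).trace = 0 := by
    intro U hU
    obtain ⟨hU1, hU2⟩ := hU
    have hVU : V * U ∈ SO3 := by
      constructor
      · calc (V * U)ᵀ * (V * U) = Uᵀ * (Vᵀ * V) * U := by
              rw [Matrix.transpose_mul]; noncomm_ring
          _ = 1 := by rw [hV1, mul_one, hU1]
      · rw [Matrix.det_mul, hV2, hU2, one_mul]
    have key : (V * U)ᵀ * B * (V * U) = Uᵀ * Matrix.diagonal b * U := by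
      rw [hVB, Matrix.transpose_mul]
      calc Uᵀ * Vᵀ * (V * Matrix.diagonal b * Vᵀ) * (V * U)
          = Uᵀ * (Vᵀ * V) * Matrix.diagonal b * ((Vᵀ * V) * U) := by noncomm_ring
        _ = Uᵀ * Matrix.diagonal b * U := by rw [hV1]; simp [Matrix.mul_one]
    have := h (V * U) hVU
    rw [key, hdiag] at this
    exact this
  have hsum : b 0 + b 1 + b 2 = 0 := by
    have : B.trace = (Matrix.diagonal b).trace := by
      rw [hVB, Matrix.trace_mul_cycle, hV1, one_mul]
    rw [htrB, Matrix.trace_diagonal, Fin.sum_univ_three] at this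
    linarith
  have hne : ¬(b 0 = b 1 ∧ b 1 = b 2) := by
    rintro ⟨h1, h2⟩
    apply hBne
    have hb0 : b 0 = 0 := by linarith
    have hbz : Matrix.diagonal b = 0 := by
      have : b = fun _ => (0:ℝ) := by
        funext i; fin_cases i <;> simp <;> linarith
      rw [this, Matrix.diagonal_zero]
    rw [hVB, hbz, mul_zero, zero_mul]
  exact keyaux A hA (b 0) (b 1) (b 2) hsum hne h'
end
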